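/- arXiv:2009.14141 — 4 statements merged into one kernel-verified Lean document; each statement's English description precedes it below -/
import Mathlib

section
/- The chromatic symmetric function of the complete multipartite graph G_λ, expanded in augmented monomial symmetric functions, has coefficient of m̃_μ equal to the number of ordered tuples (μ^1,...,μ^k) of partitions such that μ^i ⊢ λ_i for each i and the disjoint union of the parts of the μ^i equals μ, where each tuple is counted with weight ∏_i (set partitions of a λ_i-set of type μ^i); equivalently [m̃_μ] r_λ = (∏_i λ_i!/∏_i μ_i!) · ∑_{puzzles μ→λ} 1/∏_{i,j} n_j(μ^i)!. -/
open Finset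
open scoped Classical

noncomputable section

/-- The multiset of (nonzero) exponents of a monomial. -/
def expParts (d : ℕ →₀ ℕ) : Multiset ℕ := d.support.val.map d

/-- `∏ i, n_i(m)!` where `n_i(m)` is the multiplicity of `i` in the multiset `m`. -/
def multFact (m : Multiset ℕ) : ℕ := ∏ j ∈ m.toFinset, (m.count j).factorial

/-- The augmented monomial symmetric function indexed by a multiset of positive parts. -/
def mtilde (m : Multiset ℕ) : MvPowerSeries ℕ ℚ :=
  fun d => if expParts d = m then (multFact m : ℚ) else 0

/-- The chromatic symmetric function of a finite simple graph, as a power series in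
countably many variables: the coefficient of a monomial `d` is the number of proper
colorings `κ : V → ℕ` in which color `c` is used exactly `d c` times. -/
def csf {V : Type} [Fintype V] (G : SimpleGraph V) : MvPowerSeries ℕ ℚ :=
  fun d => (Nat.card {κ : V → ℕ // (∀ v w, G.Adj v w → κ v ≠ κ w) ∧
      ∀ c, (Finset.univ.filter (fun v => κ v = c)).card = d c} : ℚ)

/-- The complete multipartite graph with stable sets of sizes given by the list `l`. -/
def multipartite (l : List ℕ) : SimpleGraph (Σ j : Fin l.length, Fin (l.get j)) where
  Adj x y := x.1 ≠ y.1
  symm := ⟨fun _ _ h => Ne.symm h⟩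
  loopless := ⟨fun _ h => h rfl⟩

/-- `r_λ`, the chromatic symmetric function of the complete multipartite graph `G_λ`. -/
def rOf (m : Multiset ℕ) : MvPowerSeries ℕ ℚ := csf (multipartite m.toList)

/-- A set partition (of the whole vertex set) is stable if each block is independent. -/
def IsStable {V : Type} [Fintype V] [DecidableEq V] (G : SimpleGraph V)
    (P : Finpartition (Finset.univ : Finset V)) : Prop :=
  ∀ b ∈ P.parts, ∀ v ∈ b, ∀ w ∈ b, ¬ G.Adj v w

/-- The multiset of block sizes of a finpartition. -/
def typeOf {V : Type} [DecidableEq V] {s : Finset V} (P : Finpartition s) : Multiset ℕ :=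
  P.parts.val.map Finset.card

/-- The puzzles of `μ` into the list of parts `l`: tuples `(μ^1,…,μ^k)` with
`μ^i ⊢ l_i` whose combined parts form `μ`. -/
def puzzles (mu : Multiset ℕ) (l : List ℕ) : Finset (Fin l.length → Multiset ℕ) :=
  (Fintype.piFinset fun _ => mu.powerset.toFinset).filter
    (fun g => (∑ i, g i) = mu ∧ ∀ i, (g i).sum = l.get i)

/-- A canonical monomial whose exponents are the parts of `m`. -/
def dmon (m : Multiset ℕ) : ℕ →₀ ℕ := m.toList.toFinsupp

/-! In a proper coloring of `G_λ` each color class lies inside one stable set, so a coloring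
with color multiplicities `μ` determines the map `f` sending each color to its stable set. Given
`f`, the stable sets are colored independently, and coloring the `i`-th one is a multinomial
count `λ_i! / ∏_{f c = i} μ_c!`. Grouping the admissible maps `f` by the multisets `μ^i` of
multiplicities they send to each stable set turns them into puzzles of `μ` into `λ`, and the
number of `f` over a fixed puzzle is again a product of multinomials,
`∏_j n_j(μ)! / ∏_i n_j(μ^i)!`. -/

open Nat

namespace Equiv

def subtypeEquivOverEquivPi {V W C : Type*} (f : V → C) (g : W → C) :
    {E : V ≃ W // ∀ v, g (E v) = f v} ≃ Π c, ({v // f v = c} ≃ {w // g w = c}) where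
  toFun E c := E.1.subtypeEquiv fun v => by rw [E.2 v]
  invFun F := ⟨ofFiberEquiv F, ofFiberEquiv_map F⟩
  left_inv E := rfl
  right_inv F := by
    funext c
    ext ⟨v, rfl⟩
    rfl

end Equiv

theorem Nat.card_equiv_eq_ite (α β : Type*) [Finite α] [Finite β] :
    Nat.card (α ≃ β) = if Nat.card α = Nat.card β then (Nat.card α)! else 0 := by
  have := Fintype.ofFinite α
  have := Fintype.ofFinite β
  simp only [Nat.card_eq_fintype_card]
  split_ifs with h
  · exact Fintype.card_equiv (Fintype.equivOfCardEq h)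
  · exact Fintype.card_eq_zero_iff.mpr ⟨fun E => h (Fintype.card_congr E)⟩

/-- Count the bijections `V ≃ Σ c, Fin (e c)` according to the map `V → C` they induce. -/
theorem Nat.card_fun_fiber_eq_mul_prod_factorial {V C : Type*} [Finite V] [Fintype C]
    (e : C → ℕ) :
    Nat.card {h : V → C // ∀ c, Nat.card {v // h v = c} = e c} * ∏ c, (e c)! =
      if Nat.card V = ∑ c, e c then (Nat.card V)! else 0 := by
  set W := Σ c, Fin (e c)
  have hW : Nat.card W = ∑ c, e c := by simp [W]
  have hfiber (h : V → C) : Nat.card {E : V ≃ W // ∀ v, (E v).1 = h v} =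
      if ∀ c, Nat.card {v // h v = c} = e c then ∏ c, (e c)! else 0 := by
    rw [Nat.card_congr (Equiv.subtypeEquivOverEquivPi h Sigma.fst), Nat.card_pi]
    simp only [Nat.card_equiv_eq_ite, Nat.card_congr (Equiv.sigmaSubtype _), Nat.card_fin]
    split_ifs with hall
    · exact Finset.prod_congr rfl fun c _ => by rw [if_pos (hall c), hall c]
    · obtain ⟨c, hc⟩ := not_forall.mp hall
      exact Finset.prod_eq_zero (Finset.mem_univ c) (if_neg hc)
  have := Fintype.ofFinite V
  calc Nat.card {h : V → C // ∀ c, Nat.card {v // h v = c} = e c} * ∏ c, (e c)!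
      = ∑ h : V → C, Nat.card {E : V ≃ W // ∀ v, (E v).1 = h v} := by
        simp only [hfiber, Finset.sum_ite, Finset.sum_const_zero, add_zero, Finset.sum_const,
          smul_eq_mul, Nat.card_eq_fintype_card, Fintype.card_subtype]
    _ = Nat.card (V ≃ W) := by
        rw [← Nat.card_sigma]
        exact Nat.card_congr <| (Equiv.sigmaCongrRight fun h =>
          Equiv.subtypeEquivRight fun E => funext_iff.symm).trans (Equiv.sigmaFiberEquiv _)
    _ = _ := by rw [Nat.card_equiv_eq_ite, hW]

theorem Nat.card_sigma_subtype {ι : Type*} [Fintype ι] {β : ι → Type*} [∀ i, Finite (β i)]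
    (P : (Σ i, β i) → Prop) : Nat.card {x // P x} = ∑ i, Nat.card {b // P ⟨i, b⟩} := by
  rw [← Nat.card_sigma]
  exact Nat.card_congr
    { toFun x := ⟨x.1.1, x.1.2, x.2⟩
      invFun y := ⟨⟨y.1, y.2.1⟩, y.2.2⟩ }

theorem Nat.card_sigma_fun_blockwise {ι C : Type*} [Fintype ι] {β : ι → Type*}
    (p : ∀ i, (β i → C) → Prop) :
    Nat.card {κ : (Σ i, β i) → C // ∀ i, p i fun b => κ ⟨i, b⟩} =
      ∏ i, Nat.card {h : β i → C // p i h} := by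
  rw [← Nat.card_pi]
  exact Nat.card_congr (((Equiv.piCurry fun _ _ => C).subtypeEquiv fun _ => Iff.rfl).trans
    Equiv.subtypePiEquivPi)

theorem Nat.cast_card_fun_fiber_eq {V C : Type*} [Finite V] [Fintype C] (e : C → ℕ) :
    (Nat.card {h : V → C // ∀ c, Nat.card {v // h v = c} = e c} : ℚ) =
      if Nat.card V = ∑ c, e c then ((Nat.card V)! : ℚ) / ∏ c, ((e c)! : ℚ) else 0 := by
  have hprod : (∏ c, ((e c)! : ℚ)) ≠ 0 := by positivity
  have hcount :=
    congrArg (Nat.cast (R := ℚ)) (Nat.card_fun_fiber_eq_mul_prod_factorial (V := V) e)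
  push_cast at hcount
  split_ifs at hcount ⊢
  · rw [eq_div_iff hprod, hcount]
  · simpa [hprod] using hcount

section Multipartite

variable {ι C : Type*} [Fintype ι] {β : ι → Type*} [∀ i, Fintype (β i)]

theorem aligned_and_card_fiber_iff [DecidableEq ι] (d : C → ℕ) (f : C → ι)
    (κ : (Σ i, β i) → C) :
    ((∀ v, f (κ v) = v.1) ∧ ∀ c, Nat.card {v // κ v = c} = d c) ↔
      ∀ i c, Nat.card {b // κ ⟨i, b⟩ = c} = if f c = i then d c else 0 := by
  constructor
  · rintro ⟨halign, hcount⟩ i c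
    have hzero (j : ι) (hj : f c ≠ j) : Nat.card {b // κ ⟨j, b⟩ = c} = 0 :=
      Nat.card_eq_zero.mpr (Or.inl ⟨fun b => hj (b.2 ▸ halign ⟨j, b.1⟩)⟩)
    split_ifs with hi
    · subst hi
      rw [← hcount c, Nat.card_sigma_subtype, Finset.sum_eq_single (f c)
        (fun j _ hj => hzero j (Ne.symm hj)) (absurd (Finset.mem_univ _))]
    · exact hzero i hi
  · intro hblock
    refine ⟨fun v => by_contra fun hv => ?_, fun c => ?_⟩
    · have hfiber := hblock v.1 (κ v)
      rw [if_neg hv, Nat.card_eq_zero] at hfiber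
      exact hfiber.elim (fun h => h.false ⟨v.2, rfl⟩) (fun h => h.false)
    · rw [Nat.card_sigma_subtype, Finset.sum_congr rfl fun i _ => hblock i c]
      simp

theorem cast_card_aligned [DecidableEq ι] [Fintype C] (d : C → ℕ) (f : C → ι) :
    (Nat.card {κ : (Σ i, β i) → C //
        (∀ v, f (κ v) = v.1) ∧ ∀ c, Nat.card {v // κ v = c} = d c} : ℚ) =
      if ∀ i, ∑ c with f c = i, d c = Nat.card (β i) then
        (∏ i, ((Nat.card (β i))! : ℚ)) / ∏ c, ((d c)! : ℚ) else 0 := by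
  rw [Nat.card_congr (Equiv.subtypeEquivRight (aligned_and_card_fiber_iff d f)),
    Nat.card_sigma_fun_blockwise fun i h =>
      ∀ c, Nat.card {b // h b = c} = if f c = i then d c else 0]
  push_cast
  simp only [Nat.cast_card_fun_fiber_eq, ← Finset.sum_filter, apply_ite Nat.factorial,
    Nat.factorial_zero, apply_ite (Nat.cast (R := ℚ)), Nat.cast_one, ← Finset.prod_filter]
  split_ifs with hall
  · rw [Finset.prod_congr rfl fun i _ => if_pos (hall i).symm, Finset.prod_div_distrib]
    congr 1
    exact Finset.prod_fiberwise _ _ _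
  · obtain ⟨i, hi⟩ := not_forall.mp hall
    exact Finset.prod_eq_zero (Finset.mem_univ i) (if_neg (Ne.symm hi))

/-- Since every color is used, a proper coloring of the complete multipartite graph determines
the unique block `f c` containing the vertices of color `c`. -/
theorem card_proper_eq_sum_card_aligned [Fintype C] [DecidableEq C] (d : C → ℕ)
    (hd : ∀ c, d c ≠ 0) :
    Nat.card {κ : (Σ i, β i) → C //
        (∀ v w, v.1 ≠ w.1 → κ v ≠ κ w) ∧ ∀ c, Nat.card {v // κ v = c} = d c} =
      ∑ f : C → ι, Nat.card {κ : (Σ i, β i) → C //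
        (∀ v, f (κ v) = v.1) ∧ ∀ c, Nat.card {v // κ v = c} = d c} := by
  have hsurj (κ : (Σ i, β i) → C) (hκ : ∀ c, Nat.card {v // κ v = c} = d c) (c : C) :
      ∃ v, κ v = c := by
    obtain ⟨⟨v, hv⟩⟩ := (Nat.card_ne_zero.mp (hκ c ▸ hd c)).1
    exact ⟨v, hv⟩
  rw [← Nat.card_sigma]
  refine (Nat.card_congr (Equiv.ofBijective (fun p => ⟨p.2.1, fun v w hvw hκ =>
    hvw (by rw [← p.2.2.1 v, ← p.2.2.1 w, hκ]), p.2.2.2⟩) ⟨?_, ?_⟩)).symm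
  · rintro ⟨f, κ, halign, hκ⟩ ⟨f', κ', halign', _⟩ heq
    obtain rfl : κ = κ' := congrArg Subtype.val heq
    obtain rfl : f = f' := funext fun c => by
      obtain ⟨v, rfl⟩ := hsurj κ hκ c
      rw [halign, halign']
    rfl
  · rintro ⟨κ, hproper, hκ⟩
    choose s hs using hsurj κ hκ
    exact ⟨⟨fun c => (s c).1, κ, fun v => by_contra fun hv => hproper _ _ hv (hs _), hκ⟩,
      rfl⟩

theorem cast_card_proper_coloring_sigma [DecidableEq ι] [Fintype C] [DecidableEq C] (d : C → ℕ)
    (hd : ∀ c, d c ≠ 0) :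
    (Nat.card {κ : (Σ i, β i) → C //
        (∀ v w, v.1 ≠ w.1 → κ v ≠ κ w) ∧ ∀ c, Nat.card {v // κ v = c} = d c} : ℚ) =
      ((∏ i, ((Nat.card (β i))! : ℚ)) / ∏ c, ((d c)! : ℚ)) *
        #{f : C → ι | ∀ i, ∑ c with f c = i, d c = Nat.card (β i)} := by
  rw [card_proper_eq_sum_card_aligned d hd]
  push_cast
  simp only [cast_card_aligned, Finset.sum_ite, Finset.sum_const_zero, add_zero,
    Finset.sum_const, nsmul_eq_mul, mul_comm]

end Multipartite

theorem Multiset.le_of_sum_eq {α ι : Type*} [Fintype ι] {g : ι → Multiset α}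
    {M : Multiset α} (hg : ∑ i, g i = M) (i : ι) : g i ≤ M :=
  hg ▸ Finset.single_le_sum (fun _ _ => Multiset.zero_le _) (mem_univ i)

theorem multFact_pos (m : Multiset ℕ) : 0 < multFact m :=
  Finset.prod_pos fun _ _ => Nat.factorial_pos _

theorem multFact_eq_prod_of_le {m M : Multiset ℕ} (h : m ≤ M) :
    multFact m = ∏ j ∈ M.toFinset, (m.count j)! := by
  refine Finset.prod_subset (Multiset.toFinset_subset.mpr (Multiset.subset_of_le h)) ?_
  intro j _ hj
  rw [Multiset.count_eq_zero.mpr (by simpa using hj), Nat.factorial_zero]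

section FiberValues

variable {ι C : Type*} [DecidableEq ι] [Fintype C]

/-- The puzzle `(μ^i)_i` of a map `f` from colors to blocks: `μ^i` collects the multiplicities
`d c` of the colors sent to block `i`. -/
def fiberValues (d : C → ℕ) (f : C → ι) (i : ι) : Multiset ℕ :=
  (univ.filter fun c => f c = i).val.map d

theorem count_map_univ (d : C → ℕ) (j : ℕ) :
    (univ.val.map d).count j = Nat.card {c // d c = j} := by
  rw [Multiset.count_map, ← Finset.filter_val, ← Finset.card_def, Nat.card_eq_fintype_card,
    Fintype.card_subtype]
  simp only [eq_comm]

theorem count_fiberValues (d : C → ℕ) (f : C → ι) (i : ι) (j : ℕ) :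
    (fiberValues d f i).count j = Nat.card {c : {c // d c = j} // f c = i} := by
  rw [fiberValues, Multiset.count_map, ← Finset.filter_val, ← Finset.card_def,
    Nat.card_congr (Equiv.subtypeSubtypeEquivSubtypeInter (fun c => d c = j) (fun c => f c = i)),
    Nat.card_eq_fintype_card, Fintype.card_subtype, Finset.filter_filter]
  simp only [eq_comm, and_comm]

theorem fiberValues_le (d : C → ℕ) (f : C → ι) (i : ι) :
    fiberValues d f i ≤ univ.val.map d :=
  Multiset.map_le_map (Finset.val_le_iff.mpr (Finset.filter_subset _ _))

theorem sum_fiberValues [Fintype ι] (d : C → ℕ) (f : C → ι) :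
    ∑ i, fiberValues d f i = univ.val.map d := by
  ext j
  rw [Multiset.count_sum', count_map_univ]
  simp only [count_fiberValues]
  rw [← Nat.card_sigma]
  exact Nat.card_congr (Equiv.sigmaFiberEquiv _)

theorem fiberValues_eq_iff [Fintype ι] (d : C → ℕ) (f : C → ι) (g : ι → Multiset ℕ)
    (hg : ∑ i, g i = univ.val.map d) :
    fiberValues d f = g ↔ ∀ (j : (univ.val.map d).toFinset) i,
      Nat.card {c : {c // d c = j} // f c = i} = (g i).count (j : ℕ) := by
  refine ⟨fun h j i => by rw [← count_fiberValues, h], fun h => funext fun i => ?_⟩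
  ext j
  by_cases hj : j ∈ (univ.val.map d).toFinset
  · rw [count_fiberValues]
    exact h ⟨j, hj⟩ i
  · rw [Multiset.mem_toFinset] at hj
    rw [Multiset.count_eq_zero.mpr fun h => hj (Multiset.mem_of_le (fiberValues_le d f i) h),
      Multiset.count_eq_zero.mpr fun h => hj (Multiset.mem_of_le (Multiset.le_of_sum_eq hg i) h)]

theorem cast_card_fiberValues_eq [Fintype ι] [DecidableEq C] (d : C → ℕ)
    (g : ι → Multiset ℕ) (hg : ∑ i, g i = univ.val.map d) :
    (#{f : C → ι | fiberValues d f = g} : ℚ) =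
      multFact (univ.val.map d) / ∏ i, multFact (g i) := by
  set M := univ.val.map d
  let e : (Σ j : M.toFinset, {c // d c = j}) ≃ C :=
    Equiv.sigmaSubtypeFiberEquiv d (· ∈ M.toFinset) fun c => by simp [M]
  have hcard : #{f : C → ι | fiberValues d f = g} = ∏ j : M.toFinset,
      Nat.card {h : {c // d c = j} → ι //
        ∀ i, Nat.card {c // h c = i} = (g i).count (j : ℕ)} := by
    rw [← Fintype.card_subtype, ← Nat.card_eq_fintype_card,
      Nat.card_congr (Equiv.subtypeEquivRight fun f => fiberValues_eq_iff d f g hg),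
      ← Nat.card_sigma_fun_blockwise (β := fun j : M.toFinset => {c // d c = j}) (fun j h =>
        ∀ i, Nat.card {c // h c = i} = (g i).count (j : ℕ))]
    exact Nat.card_congr ((e.arrowCongr (Equiv.refl ι)).symm.subtypeEquiv fun f => Iff.rfl)
  have hfactor (j : M.toFinset) : (Nat.card {h : {c // d c = j} → ι //
      ∀ i, Nat.card {c // h c = i} = (g i).count (j : ℕ)} : ℚ) =
        ((M.count (j : ℕ))! : ℚ) / ∏ i, (((g i).count (j : ℕ))! : ℚ) := by
    rw [Nat.cast_card_fun_fiber_eq, ← count_map_univ, ← Multiset.count_sum', hg, if_pos rfl]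
  rw [hcard, Nat.cast_prod, Finset.prod_congr rfl fun j _ => hfactor j, Finset.prod_div_distrib,
    Finset.prod_comm, Finset.prod_coe_sort M.toFinset fun j => ((M.count j)! : ℚ)]
  simp only [multFact_eq_prod_of_le (Multiset.le_of_sum_eq hg _), multFact_eq_prod_of_le le_rfl,
    Nat.cast_prod]
  congr 1
  exact Finset.prod_congr rfl fun i _ =>
    Finset.prod_coe_sort M.toFinset fun j => (((g i).count j)! : ℚ)

end FiberValues

theorem cast_card_block_sums_eq {C : Type*} [Fintype C] [DecidableEq C] (l : List ℕ)
    (d : C → ℕ) :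
    (#{f : C → Fin l.length | ∀ i, ∑ c with f c = i, d c = l.get i} : ℚ) =
      multFact (univ.val.map d) *
        ∑ g ∈ puzzles (univ.val.map d) l, ∏ i, (1 : ℚ) / multFact (g i) := by
  have hsum (f : C → Fin l.length) (i) : (fiberValues d f i).sum = ∑ c with f c = i, d c := by
    rw [fiberValues, Finset.sum_map_val]
  have hmaps :
      ∀ f ∈ ({f : C → Fin l.length | ∀ i, ∑ c with f c = i, d c = l.get i} : Finset _),
      fiberValues d f ∈ puzzles (univ.val.map d) l := by
    intro f hf
    simp only [puzzles, Finset.mem_filter, Fintype.mem_piFinset, Multiset.mem_toFinset,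
      Multiset.mem_powerset, hsum, fiberValues_le, implies_true, sum_fiberValues, true_and]
    exact (Finset.mem_filter.mp hf).2
  rw [Finset.card_eq_sum_card_fiberwise hmaps, Nat.cast_sum, Finset.mul_sum]
  refine Finset.sum_congr rfl fun g hg => ?_
  simp only [puzzles, Finset.mem_filter] at hg
  rw [Finset.filter_filter, Finset.filter_congr fun f _ =>
    and_iff_right_of_imp fun (hf : fiberValues d f = g) i => by rw [← hsum, hf, hg.2.2 i],
    cast_card_fiberValues_eq d g hg.2.1]
  simp [div_eq_mul_inv, Finset.prod_inv_distrib]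

theorem coeff_csf_eq_card {V : Type} [Fintype V] (G : SimpleGraph V) (d : ℕ →₀ ℕ) :
    MvPowerSeries.coeff d (csf G) = Nat.card {κ : V → d.support //
      (∀ v w, G.Adj v w → κ v ≠ κ w) ∧ ∀ c, Nat.card {v // κ v = c} = d c} := by
  have hsupp (κ : V → ℕ) (hκ : ∀ c, #{v | κ v = c} = d c) (v : V) :
      κ v ∈ d.support := by
    rw [Finsupp.mem_support_iff, ← hκ]
    exact Finset.card_ne_zero_of_mem (Finset.mem_filter.mpr ⟨mem_univ v, rfl⟩)
  have hcard (κ : V → d.support) (c : d.support) :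
      Nat.card {v // κ v = c} = #{v | (κ v : ℕ) = c} := by
    rw [Nat.card_eq_fintype_card, Fintype.card_subtype]
    simp only [Subtype.ext_iff]
  change (Nat.card _ : ℚ) = _
  congr 1
  refine Nat.card_congr ((Equiv.subtypeSubtypeEquivSubtype fun h => hsupp _ h.2).symm.trans
    (Equiv.subtypePiEquivPi.subtypeEquiv fun κ => and_congr ?_ ?_))
  · simp [Equiv.subtypePiEquivPi, Subtype.ext_iff]
  · refine ⟨fun h c => by rw [hcard]; exact h c, fun h c => ?_⟩
    by_cases hc : c ∈ d.support
    · rw [← h ⟨c, hc⟩, hcard]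
      rfl
    · rw [Finsupp.notMem_support_iff.mp hc, Finset.card_eq_zero, Finset.filter_eq_empty_iff]
      exact fun v _ hv => hc (hv ▸ κ.2 v)

theorem expParts_dmon {m : Multiset ℕ} (hm : 0 ∉ m) : expParts (dmon m) = m := by
  have hsupp : (dmon m).support = Finset.range m.toList.length := by
    rw [dmon, List.toFinsupp_support, Finset.filter_eq_self]
    intro i hi
    rw [Finset.mem_range] at hi
    rw [List.getD_eq_getElem _ _ hi]
    exact fun h0 => hm (Multiset.mem_toList.mp (h0 ▸ List.getElem_mem hi))
  have hlist : (List.range m.toList.length).map (dmon m) = m.toList :=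
    List.ext_getElem (by simp) fun i _ hi => by
      rw [List.getElem_map, List.getElem_range, dmon, List.toFinsupp_apply,
        List.getD_eq_getElem _ _ hi]
  rw [expParts, hsupp, Finset.range_val, ← Multiset.coe_range, Multiset.map_coe, hlist,
    Multiset.coe_toList]

theorem map_univ_support_eq_expParts (d : ℕ →₀ ℕ) :
    (univ : Finset d.support).val.map (fun c : d.support => d c) = expParts d := by
  rw [Finset.univ_eq_attach]
  exact Multiset.attach_map_val' d.support.val d

theorem multipartite_adj {l : List ℕ} {v w : Σ j : Fin l.length, Fin (l.get j)} :
    (multipartite l).Adj v w ↔ v.1 ≠ w.1 :=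
  Iff.rfl

/-- The coefficient of `m̃_μ` in a symmetric function `f` is the coefficient in `f` of a
monomial with exponents the parts of `μ`, divided by `∏ n_i(μ)!`. -/
theorem stmt8 (n : ℕ) (lam mu : Nat.Partition n) :
    (MvPowerSeries.coeff (dmon mu.parts) (rOf lam.parts)) / (multFact mu.parts : ℚ) =
      (((lam.parts.map Nat.factorial).prod : ℚ) / ((mu.parts.map Nat.factorial).prod : ℚ)) *
        ∑ g ∈ puzzles mu.parts lam.parts.toList, ∏ i, (1 : ℚ) / (multFact (g i) : ℚ) := by
  set d := dmon mu.parts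
  have hmu : univ.val.map (fun c : d.support => d c) = mu.parts := by
    rw [map_univ_support_eq_expParts, expParts_dmon fun h => (mu.parts_pos h).ne' rfl]
  have hcoeff : MvPowerSeries.coeff d (rOf lam.parts) =
      ((∏ i, ((lam.parts.toList.get i)! : ℚ)) / ∏ c : d.support, ((d c)! : ℚ)) *
        #{f : d.support → Fin lam.parts.toList.length |
          ∀ i, ∑ c with f c = i, d c = lam.parts.toList.get i} := by
    rw [rOf, coeff_csf_eq_card]
    simpa only [multipartite_adj, Nat.card_fin] using cast_card_proper_coloring_sigma
      (β := fun i => Fin (lam.parts.toList.get i)) (d := fun c : d.support => d c)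
      fun c => Finsupp.mem_support_iff.mp c.2
  have hfact_lam :
      ∏ i, ((lam.parts.toList.get i)! : ℚ) = ((lam.parts.map Nat.factorial).prod : ℚ) := by
    calc ∏ i, ((lam.parts.toList.get i)! : ℚ)
        = ((lam.parts.toList : Multiset ℕ).map fun k => (k ! : ℚ)).prod := by
          rw [Multiset.map_coe, Multiset.prod_coe]
          exact Fin.prod_univ_fun_getElem _ fun k => (k ! : ℚ)
      _ = _ := by simp
  have hfact_mu :
      ∏ c : d.support, ((d c)! : ℚ) = ((mu.parts.map Nat.factorial).prod : ℚ) := by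
    rw [← hmu, Multiset.map_map, Finset.prod_eq_multiset_prod]
    simp
  have hmult : (multFact mu.parts : ℚ) ≠ 0 := by exact_mod_cast (multFact_pos _).ne'
  rw [hcoeff, hfact_lam, hfact_mu, cast_card_block_sums_eq, hmu]
  field_simp
end
end

section
/- For any simple graph G with maximal stable partitions M_1,...,M_k, the chromatic symmetric function satisfies X_G = ∑_{∅ ≠ S ⊆ [k]} (-1)^{|S|-1} r_{λ(∧_{i∈S} M_i)}. -/
open Finset
open scoped Classical

noncomputable section

/-- A maximal stable partition: blocks are independent sets and there is an edge
between every pair of distinct blocks. -/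
def IsMaximalStable {V : Type} [Fintype V] [DecidableEq V] (G : SimpleGraph V)
    (P : Finpartition (Finset.univ : Finset V)) : Prop :=
  IsStable G P ∧ ∀ b1 ∈ P.parts, ∀ b2 ∈ P.parts, b1 ≠ b2 →
    ∃ v ∈ b1, ∃ w ∈ b2, G.Adj v w

/-!
A coloring is proper exactly when its color classes form a stable partition, and every stable
partition coarsens to a maximal one by repeatedly merging two blocks with no edge between them.
Hence the proper colorings using color `c` exactly `d c` times are the union over `i` of those
whose color classes refine `M i`. A coloring refines every `M i` with `i ∈ S` iff it refines
`⋀_{i ∈ S} M i`, and the colorings refining a partition `P` are the proper colorings of the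
complete multipartite graph on the blocks of `P`, counted by the coefficient of `r_{λ(P)}`.
Inclusion–exclusion over this union gives the formula.
-/

namespace Finpartition

variable {α : Type*} [DecidableEq α] {s : Finset α}

theorem part_inf (P Q : Finpartition s) {a : α} (ha : a ∈ s) :
    (P ⊓ Q).part a = P.part a ∩ Q.part a := by
  have hmem : a ∈ P.part a ∩ Q.part a := mem_inter.2 ⟨P.mem_part ha, Q.mem_part ha⟩
  refine (P ⊓ Q).part_eq_of_mem ?_ hmem
  rw [parts_inf]
  exact mem_erase.2 ⟨ne_empty_of_mem hmem, mem_image.2 ⟨(P.part a, Q.part a),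
    mem_product.2 ⟨P.part_mem.2 ha, Q.part_mem.2 ha⟩, rfl⟩⟩

theorem mem_part_inf' {ι : Type*} {t : Finset ι} (ht : t.Nonempty) (P : ι → Finpartition s)
    {a b : α} (ha : a ∈ s) : b ∈ (t.inf' ht P).part a ↔ ∀ i ∈ t, b ∈ (P i).part a := by
  induction ht using Finset.Nonempty.cons_induction with
  | singleton i => simp
  | cons i t hi ht ih => rw [Finset.inf'_cons ht, part_inf _ _ ha]; simp [ih]

theorem part_subset_part_of_le {P Q : Finpartition s} (h : P ≤ Q) (a : α) :
    P.part a ⊆ Q.part a := by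
  by_cases ha : a ∈ s
  · obtain ⟨c, hc, hPc⟩ := h (P.part_mem.2 ha)
    rwa [Q.part_eq_of_mem hc (hPc (P.mem_part ha))]
  · simp [P.part_eq_empty.2 ha]

def completeMultipartite (P : Finpartition s) : SimpleGraph α :=
  (⊤ : SimpleGraph (Finset α)).comap P.part

section Merge

variable (P : Finpartition s) {b₁ b₂ : Finset α} (h₁ : b₁ ∈ P.parts) (h₂ : b₂ ∈ P.parts)
  (hne : b₁ ≠ b₂)

def mergeParts : Finpartition s where
  parts := insert (b₁ ∪ b₂) ((P.parts.erase b₁).erase b₂)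
  supIndep := by
    rw [supIndep_iff_pairwiseDisjoint, coe_insert]
    refine (P.supIndep.pairwiseDisjoint.subset fun c hc => ?_).insert fun c hc _ => ?_
    · exact mem_of_mem_erase (mem_of_mem_erase hc)
    · obtain ⟨⟨hc, hc₁⟩, hc₂⟩ : (c ∈ P.parts ∧ c ≠ b₁) ∧ c ≠ b₂ := by simpa using hc
      exact disjoint_union_left.2 ⟨P.disjoint h₁ hc hc₁.symm, P.disjoint h₂ hc hc₂.symm⟩
  sup_parts := by
    have hP : P.parts = insert b₁ (insert b₂ ((P.parts.erase b₁).erase b₂)) := by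
      rw [insert_erase (mem_erase.2 ⟨hne.symm, h₂⟩), insert_erase h₁]
    have h := P.sup_parts
    rw [hP, sup_insert, sup_insert, ← sup_assoc] at h
    rwa [sup_insert]
  bot_notMem := by
    rw [mem_insert, not_or]
    refine ⟨fun h => ?_, fun h => P.bot_notMem (mem_of_mem_erase (mem_of_mem_erase h))⟩
    exact (P.nonempty_of_mem_parts h₁).ne_empty (union_eq_empty.1 h.symm).1

theorem le_mergeParts : P ≤ P.mergeParts h₁ h₂ hne := by
  intro b hb
  by_cases hb₁ : b = b₁
  · exact ⟨b₁ ∪ b₂, mem_insert_self _ _, hb₁ ▸ subset_union_left⟩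
  by_cases hb₂ : b = b₂
  · exact ⟨b₁ ∪ b₂, mem_insert_self _ _, hb₂ ▸ subset_union_right⟩
  · exact ⟨b, mem_insert_of_mem (mem_erase.2 ⟨hb₂, mem_erase.2 ⟨hb₁, hb⟩⟩), le_rfl⟩

theorem card_mergeParts_lt : #(P.mergeParts h₁ h₂ hne).parts < #P.parts := by
  have h₂' : b₂ ∈ P.parts.erase b₁ := mem_erase.2 ⟨hne.symm, h₂⟩
  calc #(P.mergeParts h₁ h₂ hne).parts ≤ #((P.parts.erase b₁).erase b₂) + 1 := card_insert_le _ _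
    _ = #(P.parts.erase b₁) := card_erase_add_one h₂'
    _ < #P.parts := card_erase_lt_of_mem h₁

end Merge

end Finpartition

theorem Fintype.exists_equiv_apply_eq_of_map_univ_eq {α β γ : Type*} [Fintype α] [Fintype β]
    {f : α → γ} {g : β → γ}
    (h : (univ : Finset α).val.map f = (univ : Finset β).val.map g) :
    ∃ e : α ≃ β, ∀ a, g (e a) = f a := by
  have hfiber : ∀ c, Fintype.card {a // f a = c} = Fintype.card {b // g b = c} := by
    intro c
    have := congrArg (Multiset.count c) h
    simp only [Multiset.count_map] at this
    rw [Fintype.card_subtype, Fintype.card_subtype]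
    simpa [eq_comm, Finset.card, Finset.filter_val] using this
  exact ⟨Equiv.ofFiberEquiv fun c => Fintype.equivOfCardEq (hfiber c), Equiv.ofFiberEquiv_map _⟩

theorem Finset.card_biUnion_univ_eq_sum {ι α R : Type*} [Fintype ι] [DecidableEq α] [CommRing R]
    (S : ι → Finset α) :
    (#(univ.biUnion S) : R) =
      ∑ t : {t : Finset ι // t.Nonempty}, (-1 : R) ^ (#t.1 - 1) * #(t.1.inf' t.2 S) := by
  have h := congrArg (Int.cast : ℤ → R) (inclusion_exclusion_card_biUnion univ S)
  push_cast at h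
  rw [h]
  refine Fintype.sum_equiv (Equiv.subtypeEquivRight fun t => by simp) _ _ fun t => ?_
  have ht : 1 ≤ #t.1 := card_pos.2 (mem_filter.1 t.2).2
  rw [show #t.1 + 1 = #t.1 - 1 + 2 by omega, pow_add, neg_one_sq, mul_one]
  rfl

section MaximalStable

variable {V : Type} [Fintype V] [DecidableEq V] {G : SimpleGraph V}

theorem IsStable.mergeParts {Q : Finpartition (univ : Finset V)} (hQ : IsStable G Q)
    {b₁ b₂ : Finset V} (h₁ : b₁ ∈ Q.parts) (h₂ : b₂ ∈ Q.parts) (hne : b₁ ≠ b₂)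
    (hno : ∀ v ∈ b₁, ∀ w ∈ b₂, ¬ G.Adj v w) : IsStable G (Q.mergeParts h₁ h₂ hne) := by
  intro b hb v hv w hw
  rcases mem_insert.1 hb with rfl | hb
  · rcases mem_union.1 hv with hv | hv <;> rcases mem_union.1 hw with hw | hw
    · exact hQ b₁ h₁ v hv w hw
    · exact hno v hv w hw
    · exact fun h => hno w hw v hv h.symm
    · exact hQ b₂ h₂ v hv w hw
  · exact hQ b (mem_of_mem_erase (mem_of_mem_erase hb)) v hv w hw

theorem exists_isMaximalStable_le {Q : Finpartition (univ : Finset V)} (hQ : IsStable G Q) :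
    ∃ P, IsMaximalStable G P ∧ Q ≤ P := by
  induction hn : #Q.parts using Nat.strong_induction_on generalizing Q with
  | _ n ih =>
  by_cases hmax : IsMaximalStable G Q
  · exact ⟨Q, hmax, le_rfl⟩
  obtain ⟨b₁, h₁, b₂, h₂, hne, hno⟩ :
      ∃ b₁ ∈ Q.parts, ∃ b₂ ∈ Q.parts, b₁ ≠ b₂ ∧ ∀ v ∈ b₁, ∀ w ∈ b₂, ¬ G.Adj v w := by
    simpa [IsMaximalStable, hQ] using hmax
  obtain ⟨P, hP, hle⟩ := ih _ (hn ▸ Q.card_mergeParts_lt h₁ h₂ hne)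
    (hQ.mergeParts h₁ h₂ hne hno) rfl
  exact ⟨P, hP, (Q.le_mergeParts h₁ h₂ hne).trans hle⟩

end MaximalStable

theorem csf_congr {V W : Type} [Fintype V] [Fintype W] {G : SimpleGraph V} {H : SimpleGraph W}
    (φ : G ≃g H) : csf G = csf H := by
  ext d
  simp only [MvPowerSeries.coeff_apply, csf]
  congr 1
  refine Nat.card_congr ((φ.toEquiv.arrowCongr (Equiv.refl ℕ)).subtypeEquiv fun κ => ?_)
  simp only [Equiv.arrowCongr_apply, Equiv.coe_refl, Function.comp_apply, id]
  refine and_congr ?_ (forall_congr' fun c => ?_)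
  · rw [φ.toEquiv.surjective.forall]
    refine forall_congr' fun v => ?_
    rw [φ.toEquiv.surjective.forall]
    simp only [Equiv.symm_apply_apply]
    exact forall_congr' fun w => imp_congr_left φ.map_adj_iff.symm
  · rw [card_equiv φ.toEquiv.symm (t := {v | κ v = c}) (by simp)]

theorem nonempty_multipartite_typeOf_iso {V : Type} [Fintype V] [DecidableEq V]
    (P : Finpartition (univ : Finset V)) :
    Nonempty (multipartite (typeOf P).toList ≃g P.completeMultipartite) := by
  set l := (typeOf P).toList
  obtain ⟨e, he⟩ : ∃ e : Fin l.length ≃ P.parts, ∀ j, #(e j).1 = l.get j := by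
    refine Fintype.exists_equiv_apply_eq_of_map_univ_eq (f := l.get)
      (g := fun t : P.parts => #t.1) ?_
    rw [Fin.univ_val_map, List.ofFn_get, Multiset.coe_toList, typeOf, univ_eq_attach,
      attach_val]
    exact (Multiset.attach_map_val' _ _).symm
  obtain ⟨f, hf⟩ := P.exists_enumeration
  let σ : (Σ j : Fin l.length, Fin (l.get j)) ≃ Σ t : P.parts, Fin #t.1 :=
    Equiv.sigmaCongr e fun j => finCongr (he j).symm
  refine ⟨⟨σ.trans (f.symm.trans (Equiv.subtypeUnivEquiv mem_univ)), fun {x y} => ?_⟩⟩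
  have key := hf (f.symm (σ x)) (f.symm (σ y))
  simp only [Equiv.apply_symm_apply] at key
  exact not_congr (key.trans e.injective.eq_iff)

section Colorings

variable {V : Type} [Fintype V] (d : ℕ →₀ ℕ)

def coloringsWithUsage : Finset (V → ℕ) :=
  {κ ∈ Fintype.piFinset fun _ => d.support | ∀ c, #{v | κ v = c} = d c}

variable {d} in
theorem mem_coloringsWithUsage {κ : V → ℕ} :
    κ ∈ coloringsWithUsage d ↔ ∀ c, #{v | κ v = c} = d c := by
  refine mem_filter.trans ⟨And.right, fun h => ⟨Fintype.mem_piFinset.2 fun v => ?_, h⟩⟩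
  rw [Finsupp.mem_support_iff, ← h]
  exact (card_pos.2 ⟨v, by simp⟩).ne'

theorem coeff_csf (G : SimpleGraph V) :
    MvPowerSeries.coeff d (csf G) = #{κ ∈ coloringsWithUsage d | ∀ v w, G.Adj v w → κ v ≠ κ w} := by
  rw [MvPowerSeries.coeff_apply, csf, ← Nat.card_eq_finsetCard]
  congr 1
  exact Nat.card_congr <| Equiv.subtypeEquivRight fun κ => by
    rw [mem_filter, mem_coloringsWithUsage, and_comm]

variable [DecidableEq V]

def refiningColorings (P : Finpartition (univ : Finset V)) : Finset (V → ℕ) :=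
  {κ ∈ coloringsWithUsage d | ∀ v w, κ v = κ w → w ∈ P.part v}

theorem coeff_rOf_typeOf (P : Finpartition (univ : Finset V)) :
    MvPowerSeries.coeff d (rOf (typeOf P)) = #(refiningColorings d P) := by
  rw [rOf, csf_congr (nonempty_multipartite_typeOf_iso P).some, coeff_csf, refiningColorings]
  congr 3
  ext κ
  refine forall_congr' fun v => forall_congr' fun w => ?_
  rw [P.mem_part_iff_part_eq_part (mem_univ w) (mem_univ v), eq_comm (a := P.part w)]
  exact not_imp_not

theorem refiningColorings_inf' {ι : Type*} {t : Finset ι} (ht : t.Nonempty)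
    (M : ι → Finpartition (univ : Finset V)) :
    refiningColorings d (t.inf' ht M) = t.inf' ht fun i => refiningColorings d (M i) := by
  ext κ
  simp only [refiningColorings, mem_inf', mem_filter, Finpartition.mem_part_inf' ht M (mem_univ _)]
  constructor
  · exact fun ⟨hκ, h⟩ i hi => ⟨hκ, fun v w hvw => h v w hvw i hi⟩
  · intro h
    obtain ⟨i, hi⟩ := ht
    exact ⟨(h i hi).1, fun v w hvw j hj => (h j hj).2 v w hvw⟩

end Colorings

theorem properColorings_eq_biUnion {V : Type} [Fintype V] [DecidableEq V] {G : SimpleGraph V}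
    (d : ℕ →₀ ℕ) {ι : Type*} [Fintype ι] {M : ι → Finpartition (univ : Finset V)}
    (hM : ∀ i, IsStable G (M i)) (hcover : ∀ P, IsMaximalStable G P → ∃ i, M i = P) :
    {κ ∈ (coloringsWithUsage d : Finset (V → ℕ)) | ∀ v w, G.Adj v w → κ v ≠ κ w} =
      univ.biUnion fun i => refiningColorings d (M i) := by
  ext κ
  simp only [mem_filter, mem_biUnion, mem_univ, true_and, refiningColorings]
  constructor
  · rintro ⟨hκ, hproper⟩
    let Q := Finpartition.ofSetoid (Setoid.ker κ)
    have hQ : ∀ v w, w ∈ Q.part v ↔ κ v = κ w := fun v w =>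
      Finpartition.mem_part_ofSetoid_iff_rel
    have hQst : IsStable G Q := fun b hb v hv w hw hadj =>
      hproper v w hadj ((hQ v w).1 (Q.part_eq_of_mem hb hv ▸ hw))
    obtain ⟨P, hP, hle⟩ := exists_isMaximalStable_le hQst
    obtain ⟨i, rfl⟩ := hcover P hP
    exact ⟨i, hκ, fun v w hvw => Finpartition.part_subset_part_of_le hle v ((hQ v w).2 hvw)⟩
  · rintro ⟨i, hκ, hrefine⟩
    refine ⟨hκ, fun v w hadj hvw => ?_⟩
    exact hM i _ ((M i).part_mem.2 (mem_univ v)) v ((M i).mem_part (mem_univ v)) w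
      (hrefine v w hvw) hadj

theorem stmt11_general {V : Type} [Fintype V] [DecidableEq V] (G : SimpleGraph V)
    (k : ℕ) (M : Fin k → Finpartition (Finset.univ : Finset V))
    (hall : ∀ P, IsMaximalStable G P ↔ ∃ i, M i = P) :
    csf G = ∑ S : {S : Finset (Fin k) // S.Nonempty},
      ((-1 : ℚ) ^ ((S : Finset (Fin k)).card - 1)) •
        rOf (typeOf ((S : Finset (Fin k)).inf' S.2 M)) := by
  ext d
  have hM : ∀ i, IsStable G (M i) := fun i => ((hall (M i)).2 ⟨i, rfl⟩).1
  rw [coeff_csf, properColorings_eq_biUnion d hM fun P => (hall P).1,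
    card_biUnion_univ_eq_sum, map_sum]
  refine sum_congr rfl fun S _ => ?_
  rw [LinearMap.map_smul, coeff_rOf_typeOf, refiningColorings_inf', smul_eq_mul]

/-- If `M_1,…,M_k` are the maximal stable partitions of `G`, then
`X_G = ∑_{∅ ≠ S ⊆ [k]} (-1)^{|S|-1} r_{λ(∧_{i∈S} M_i)}`. -/
theorem stmt11 {V : Type} [Fintype V] [DecidableEq V] (G : SimpleGraph V)
    (k : ℕ) (M : Fin k → Finpartition (Finset.univ : Finset V))
    (hinj : Function.Injective M)
    (hall : ∀ P, IsMaximalStable G P ↔ ∃ i, M i = P) :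
    csf G = ∑ S : {S : Finset (Fin k) // S.Nonempty},
      ((-1 : ℚ) ^ ((S : Finset (Fin k)).card - 1)) •
        rOf (typeOf ((S : Finset (Fin k)).inf' S.2 M)) :=
  stmt11_general G k M hall
end
end

section
/- For every partition μ of n: ∑_{λ⊢n} (1/∏_i n_i(λ)!) ∑_{puzzles μ→λ} ∏_i ((l(μ^i)-1)!/∏_j n_j(μ^i)!) = l(μ)!/∏_i n_i(μ)!. -/
/-!
Write `w(m) = |m|! / ∏ n_i(m)!` (`wordWeight`) for the number of words with letter multiset `m`,
and `c(m) = w(m) / |m|` (`cycleWeight`). The blocks of a puzzle are nonempty because the parts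
are positive. Letting the `k!` permutations of the `k = l(λ)` blocks act, a tuple of blocks whose
multiset of block sums is `λ` is reordered into a puzzle of `λ` in exactly `∏ n_i(λ)!` ways, so
the left side is `F(μ) = ∑_k (1/k!) ∑ c(ν_1) ⋯ c(ν_k)` (`expBlockSum`), summed over ordered
tuples of nonempty multisets with sum `μ`. This is the coefficient of `x^μ` in
`exp(-log(1 - ∑ x_j)) = 1 / (1 - ∑ x_j)`, namely `w(μ)`. Instead of power series we use the
Euler operator: marking one block gives `|μ| F(μ) = ∑_{ν ≠ 0} w(ν) F(μ - ν)`, cutting a word in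
two gives `∑_ν w(ν) w(μ - ν) = (|μ| + 1) w(μ)`, so `F = w` by induction on `|μ|`.
-/

open Finset
open scoped Classical

noncomputable section

open scoped Nat

namespace Multiset

variable {α : Type*}

theorem sum_map_card_powerset {M : Type*} [AddCommMonoid M] (s : Multiset α) (f : ℕ → M) :
    (s.powerset.map fun ν => f (card ν)).sum =
      ∑ k ∈ Finset.range (card s + 1), (card s).choose k • f k := by
  rw [← bind_powerset_len, map_bind, sum_bind, Finset.sum, Finset.range_val]
  refine congrArg sum (map_congr rfl fun k _ => ?_)
  rw [map_congr rfl fun ν hν => by rw [(mem_powersetCard.1 hν).2], map_const', sum_replicate,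
    card_powersetCard]

variable [DecidableEq α]

theorem count_powerset_eq_prod (s t : Multiset α) {F : Finset α} (hF : t.toFinset ⊆ F) :
    s.powerset.count t = ∏ j ∈ F, (s.count j).choose (t.count j) := by
  induction s using Multiset.induction generalizing t with
  | empty =>
    rcases eq_or_ne t 0 with rfl | ht
    · simp
    · obtain ⟨j, hj⟩ := exists_mem_of_ne_zero ht
      rw [powerset_zero, count_singleton, if_neg ht]
      refine (Finset.prod_eq_zero (hF (mem_toFinset.2 hj)) (Nat.choose_eq_zero_of_lt ?_)).symm
      simpa using count_pos.2 hj
  | cons a s ih =>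
    rw [powerset_cons, count_add, ih t hF]
    by_cases ha : a ∈ t
    · obtain ⟨t, rfl⟩ := exists_cons_of_mem ha
      have htF : t.toFinset ⊆ F := fun j hj => hF (by simp_all)
      rw [count_map_eq_count' _ _ (fun _ _ => (cons_inj_right a).1), ih t htF]
      refine prod_add_prod_eq (i := a) (hF (by simp)) ?_ (fun j _ hj => ?_) (fun j _ hj => ?_)
      · simp [Nat.choose_succ_succ', add_comm]
      · simp [count_cons_of_ne hj]
      · simp [count_cons_of_ne hj]
    · rw [count_eq_zero.2 fun h => ha (by obtain ⟨x, -, rfl⟩ := mem_map.1 h; simp), add_zero]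
      refine prod_congr rfl fun j _ => ?_
      rcases eq_or_ne j a with rfl | hj
      · simp [count_eq_zero.2 ha]
      · rw [count_cons_of_ne hj]

end Multiset

theorem multFact_eq_prod_of_subset (m : Multiset ℕ) {F : Finset ℕ} (hF : m.toFinset ⊆ F) :
    multFact m = ∏ j ∈ F, (m.count j)! :=
  prod_subset hF fun _ _ hj => by
    rw [Multiset.count_eq_zero.2 (by simpa using hj), Nat.factorial_zero]

theorem multFact_ne_zero (m : Multiset ℕ) : multFact m ≠ 0 :=
  prod_ne_zero_iff.2 fun _ _ => Nat.factorial_ne_zero _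

theorem multFact_mul_multFact_sub_mul_count_powerset {ν μ : Multiset ℕ} (h : ν ≤ μ) :
    multFact ν * multFact (μ - ν) * μ.powerset.count ν = multFact μ := by
  have hν : ν.toFinset ⊆ μ.toFinset := Multiset.toFinset_subset.2 (Multiset.subset_of_le h)
  have hμν : (μ - ν).toFinset ⊆ μ.toFinset :=
    Multiset.toFinset_subset.2 (Multiset.subset_of_le (Multiset.sub_le_self μ ν))
  rw [multFact_eq_prod_of_subset ν hν, multFact_eq_prod_of_subset _ hμν,
    Multiset.count_powerset_eq_prod μ ν hν, multFact, ← prod_mul_distrib, ← prod_mul_distrib]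
  refine prod_congr rfl fun j _ => ?_
  rw [Multiset.count_sub, mul_comm, ← mul_assoc]
  exact Nat.choose_mul_factorial_mul_factorial (Multiset.count_le_of_le j h)

def wordWeight (m : Multiset ℕ) : ℚ := (Multiset.card m)! / multFact m

def cycleWeight (m : Multiset ℕ) : ℚ := (Multiset.card m - 1)! / multFact m

theorem card_mul_cycleWeight {m : Multiset ℕ} (hm : m ≠ 0) :
    Multiset.card m * cycleWeight m = wordWeight m := by
  rw [cycleWeight, wordWeight, mul_div_assoc', ← Nat.cast_mul,
    Nat.mul_factorial_pred (Multiset.card_pos.2 hm).ne']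

theorem wordWeight_zero : wordWeight 0 = 1 := by simp [wordWeight, multFact]

theorem wordWeight_mul_wordWeight_sub {ν μ : Multiset ℕ} (h : ν ≤ μ) :
    wordWeight ν * wordWeight (μ - ν) =
      μ.powerset.count ν •
        ((Multiset.card ν)! * (Multiset.card μ - Multiset.card ν)! / multFact μ : ℚ) := by
  rw [← multFact_mul_multFact_sub_mul_count_powerset h, wordWeight, wordWeight,
    Multiset.card_sub h, nsmul_eq_mul]
  have := multFact_ne_zero ν
  have := multFact_ne_zero (μ - ν)
  have := (Multiset.count_pos.2 (Multiset.mem_powerset.2 h)).ne'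
  push_cast
  field_simp

theorem sum_wordWeight_mul_wordWeight_sub (μ : Multiset ℕ) :
    ∑ ν ∈ μ.powerset.toFinset, wordWeight ν * wordWeight (μ - ν) =
      (Multiset.card μ + 1) * wordWeight μ := by
  set l := Multiset.card μ
  rw [sum_congr rfl fun ν hν => wordWeight_mul_wordWeight_sub
      (Multiset.mem_powerset.1 (Multiset.mem_toFinset.1 hν)), ← sum_multiset_map_count,
    Multiset.sum_map_card_powerset μ fun k => (k ! * (l - k)! / multFact μ : ℚ)]
  have hterm : ∀ k ∈ range (l + 1),
      l.choose k • (k ! * (l - k)! / multFact μ : ℚ) = wordWeight μ := by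
    intro k hk
    rw [wordWeight, nsmul_eq_mul, mul_div_assoc', ← mul_assoc]
    norm_cast
    rw [Nat.choose_mul_factorial_mul_factorial (Nat.lt_succ_iff.1 (mem_range.1 hk))]
  rw [sum_congr rfl hterm, sum_const, card_range, nsmul_eq_mul]
  push_cast; ring

section BlockTuples

variable {α : Type*} {k : ℕ} {μ : Multiset α} {g : Fin k → Multiset α}

theorem le_of_sum_eq (h : ∑ i, g i = μ) (i : Fin k) : g i ≤ μ :=
  h ▸ single_le_sum (fun _ _ => Multiset.zero_le _) (mem_univ i)

variable [DecidableEq α]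

def blockTuples (k : ℕ) (μ : Multiset α) : Finset (Fin k → Multiset α) :=
  (Fintype.piFinset fun _ => μ.powerset.toFinset).filter fun g => ∑ i, g i = μ ∧ ∀ i, g i ≠ 0

theorem mem_blockTuples : g ∈ blockTuples k μ ↔ ∑ i, g i = μ ∧ ∀ i, g i ≠ 0 := by
  simp only [blockTuples, mem_filter, Fintype.mem_piFinset, Multiset.mem_toFinset,
    Multiset.mem_powerset, and_iff_right_iff_imp]
  exact fun h => le_of_sum_eq h.1

theorem comp_perm_mem_blockTuples (σ : Equiv.Perm (Fin k)) :
    g ∘ σ ∈ blockTuples k μ ↔ g ∈ blockTuples k μ := by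
  simp only [mem_blockTuples, Function.comp_apply, Equiv.sum_comp σ g]
  exact and_congr_right' (σ.forall_congr_right (q := fun i => g i ≠ 0))

theorem card_le_of_mem_blockTuples (hg : g ∈ blockTuples k μ) : k ≤ Multiset.card μ := by
  obtain ⟨hsum, hne⟩ := mem_blockTuples.1 hg
  calc k = ∑ _i : Fin k, 1 := by simp
    _ ≤ ∑ i, Multiset.card (g i) := sum_le_sum fun i _ => Multiset.card_pos.2 (hne i)
    _ = Multiset.card μ := by rw [← hsum, Multiset.card_sum]

theorem blockTuples_eq_empty_of_card_lt (h : Multiset.card μ < k) : blockTuples k μ = ∅ :=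
  eq_empty_of_forall_notMem fun _ hg => (card_le_of_mem_blockTuples hg).not_gt h

theorem sum_blockTuples_succ {R : Type*} [CommSemiring R] (i : Fin (k + 1))
    (a b : Multiset α → R) :
    ∑ g ∈ blockTuples (k + 1) μ, a (g i) * ∏ j, b (g (i.succAbove j)) =
      ∑ ν ∈ μ.powerset.toFinset.erase 0, a ν * ∑ g ∈ blockTuples k (μ - ν), ∏ j, b (g j) := by
  simp_rw [mul_sum]
  rw [sum_sigma']
  refine sum_nbij' (fun g => ⟨g i, i.removeNth g⟩) (fun p => i.insertNth p.1 p.2) ?_ ?_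
    (fun g _ => Fin.insertNth_self_removeNth i g) (fun p _ => by simp) (fun g _ => rfl)
  · intro g hg
    obtain ⟨hsum, hne⟩ := mem_blockTuples.1 hg
    rw [Fin.sum_univ_succAbove g i] at hsum
    simp only [mem_sigma, mem_erase, Multiset.mem_toFinset, Multiset.mem_powerset,
      mem_blockTuples]
    refine ⟨⟨hne i, hsum ▸ Multiset.le_add_right _ _⟩, ?_, fun j => hne _⟩
    rw [← hsum, add_tsub_cancel_left]
    rfl
  · rintro ⟨ν, g⟩ hp
    simp only [mem_sigma, mem_erase, Multiset.mem_toFinset, Multiset.mem_powerset,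
      mem_blockTuples] at hp
    obtain ⟨⟨hν, hνμ⟩, hsum, hne⟩ := hp
    rw [mem_blockTuples, Fin.sum_univ_succAbove _ i, Fin.forall_iff_succAbove i]
    simp only [Fin.insertNth_apply_same, Fin.insertNth_apply_succAbove]
    exact ⟨by rw [hsum, add_tsub_cancel_of_le hνμ], hν, hne⟩

end BlockTuples

def blockSum (k : ℕ) (μ : Multiset ℕ) : ℚ := ∑ g ∈ blockTuples k μ, ∏ i, cycleWeight (g i)

def expBlockSum (μ : Multiset ℕ) : ℚ :=
  ∑ k ∈ range (Multiset.card μ + 1), (k ! : ℚ)⁻¹ * blockSum k μ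

theorem blockSum_zero_left (μ : Multiset ℕ) : blockSum 0 μ = if μ = 0 then 1 else 0 := by
  split_ifs with hμ
  · simp [blockSum, blockTuples, hμ]
  · simp [blockSum, blockTuples, Ne.symm hμ]

theorem card_mul_blockSum_succ (k : ℕ) (μ : Multiset ℕ) :
    Multiset.card μ * blockSum (k + 1) μ =
      (k + 1) * ∑ ν ∈ μ.powerset.toFinset.erase 0, wordWeight ν * blockSum k (μ - ν) := by
  have hpoint : ∀ g ∈ blockTuples (k + 1) μ, Multiset.card μ * ∏ i, cycleWeight (g i) =
      ∑ i, wordWeight (g i) * ∏ j, cycleWeight (g (i.succAbove j)) := by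
    intro g hg
    obtain ⟨hsum, hne⟩ := mem_blockTuples.1 hg
    rw [← hsum, Multiset.card_sum, Nat.cast_sum, sum_mul]
    refine sum_congr rfl fun i _ => ?_
    rw [Fin.prod_univ_succAbove _ i, ← mul_assoc, card_mul_cycleWeight (hne i)]
  rw [blockSum, mul_sum, sum_congr rfl hpoint, sum_comm]
  simp_rw [sum_blockTuples_succ]
  rw [sum_const, card_univ, Fintype.card_fin, nsmul_eq_mul]
  push_cast
  rfl

theorem expBlockSum_eq_sum_range {μ : Multiset ℕ} {N : ℕ} (h : Multiset.card μ < N) :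
    expBlockSum μ = ∑ k ∈ range N, (k ! : ℚ)⁻¹ * blockSum k μ := by
  refine sum_subset (range_subset_range.2 h) fun k _ hk => ?_
  rw [blockSum, blockTuples_eq_empty_of_card_lt (by simpa using hk), sum_empty, mul_zero]

theorem expBlockSum_eq_wordWeight (μ : Multiset ℕ) : expBlockSum μ = wordWeight μ := by
  induction h : Multiset.card μ using Nat.strong_induction_on generalizing μ with
  | _ l ih =>
  rcases eq_or_ne μ 0 with rfl | hμ
  · simp [expBlockSum, blockSum_zero_left, wordWeight_zero]
  have hl : (l : ℚ) ≠ 0 := by rw [← h]; exact_mod_cast (Multiset.card_pos.2 hμ).ne'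
  have hconv := sum_wordWeight_mul_wordWeight_sub μ
  rw [← add_sum_erase _ _ (show (0 : Multiset ℕ) ∈ μ.powerset.toFinset by simp),
    wordWeight_zero, one_mul, tsub_zero, h] at hconv
  refine mul_left_cancel₀ hl ?_
  calc (l : ℚ) * expBlockSum μ
      = ∑ k ∈ range l, ((k + 1)! : ℚ)⁻¹ * (l * blockSum (k + 1) μ) := by
        rw [expBlockSum, h, sum_range_succ', blockSum_zero_left, if_neg hμ, mul_zero, add_zero,
          mul_sum]
        exact sum_congr rfl fun k _ => by ring
    _ = ∑ ν ∈ μ.powerset.toFinset.erase 0,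
          wordWeight ν * ∑ k ∈ range l, (k ! : ℚ)⁻¹ * blockSum k (μ - ν) := by
        simp_rw [← h, card_mul_blockSum_succ, mul_sum]
        rw [sum_comm]
        refine sum_congr rfl fun ν _ => sum_congr rfl fun k _ => ?_
        rw [Nat.factorial_succ]
        push_cast
        field_simp
    _ = ∑ ν ∈ μ.powerset.toFinset.erase 0, wordWeight ν * wordWeight (μ - ν) := by
        refine sum_congr rfl fun ν hν => ?_
        obtain ⟨hν0, hνμ⟩ := mem_erase.1 hν
        have hle : ν ≤ μ := Multiset.mem_powerset.1 (Multiset.mem_toFinset.1 hνμ)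
        have hlt : Multiset.card (μ - ν) < l := by
          have := Multiset.card_pos.2 hν0
          have := Multiset.card_le_card hle
          rw [← h, Multiset.card_sub hle]
          omega
        rw [← expBlockSum_eq_sum_range hlt, ih _ hlt _ rfl]
    _ = l * wordWeight μ := by linear_combination hconv

theorem card_filter_perm_comp_eq {ι β : Type*} [Fintype ι] [DecidableEq ι] [DecidableEq β]
    {s t : ι → β} (h : univ.val.map s = univ.val.map t) :
    #{σ : Equiv.Perm ι | s ∘ σ = t} =
      ∏ v ∈ (univ.val.map t).toFinset, ((univ.val.map t).count v)! := by
  have hfiber : ∀ (f : ι → β) v, Fintype.card {i // f i = v} = (univ.val.map f).count v :=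
    fun f v => by
      rw [Fintype.card_subtype, Multiset.count_map, card_def, filter_val]
      exact congrArg Multiset.card (Multiset.filter_congr fun _ _ => eq_comm)
  have e : ∀ v, {i // t i = v} ≃ {i // s i = v} := fun v =>
    Fintype.equivOfCardEq (by rw [hfiber, hfiber, h])
  let σ₀ : Equiv.Perm ι := ((Equiv.sigmaFiberEquiv t).symm.trans (Equiv.sigmaCongrRight e)).trans
    (Equiv.sigmaFiberEquiv s)
  have hσ₀ : s ∘ σ₀ = t := funext fun i => (e (t i) ⟨i, rfl⟩).prop
  have hstab : ∀ σ : Equiv.Perm ι, s ∘ σ = t ↔ t ∘ (Equiv.mulLeft σ₀⁻¹ σ) = t := fun σ => by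
    rw [← hσ₀]
    constructor <;> intro hσ <;> ext i <;> simpa using congrFun hσ i
  rw [← Fintype.card_subtype, Fintype.card_congr (Equiv.subtypeEquiv
      (p := fun σ : Equiv.Perm ι => s ∘ ⇑σ = t) (q := fun τ : Equiv.Perm ι => t ∘ ⇑τ = t)
      (Equiv.mulLeft σ₀⁻¹) hstab), DomMulAct.stabilizer_card']
  exact prod_congr rfl fun v _ => by rw [hfiber]

def blockSums {k : ℕ} (g : Fin k → Multiset ℕ) : Multiset ℕ := univ.val.map fun i => (g i).sum

theorem blockSums_comp_perm {k : ℕ} (g : Fin k → Multiset ℕ) (σ : Equiv.Perm (Fin k)) :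
    blockSums (g ∘ σ) = blockSums g := by
  unfold blockSums
  conv_rhs => rw [← Multiset.map_univ_val_equiv σ, Multiset.map_map]
  rfl

theorem factorial_mul_sum_filter_sums_eq {k : ℕ} (μ : Multiset ℕ) (t : Fin k → ℕ)
    (c : Multiset ℕ → ℚ) :
    (k ! : ℚ) * ∑ g ∈ blockTuples k μ with (fun i => (g i).sum) = t, ∏ i, c (g i) =
      multFact (univ.val.map t) *
        ∑ g ∈ blockTuples k μ with blockSums g = univ.val.map t, ∏ i, c (g i) := by
  -- Both sides count the pairs `(g, σ)` for which `g ∘ σ` has block sums exactly `t`.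
  set A := (blockTuples k μ).filter fun g => blockSums g = univ.val.map t
  have hshift : ∀ σ : Equiv.Perm (Fin k),
      ∑ h ∈ blockTuples k μ with (fun i => (h i).sum) = t, ∏ i, c (h i) =
        ∑ g ∈ A with (fun i => (g i).sum) ∘ σ = t, ∏ i, c (g i) := by
    intro σ
    refine sum_nbij' (fun h => h ∘ σ.symm) (fun g => g ∘ σ) ?_ ?_ (fun h _ => by ext; simp)
      (fun g _ => by ext; simp) (fun h _ => (Equiv.prod_comp σ.symm fun i => c (h i)).symm)
    · intro h hh
      simp only [mem_filter, comp_perm_mem_blockTuples, A] at hh ⊢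
      refine ⟨⟨hh.1, ?_⟩, by ext; simp [← hh.2]⟩
      rw [blockSums_comp_perm, blockSums, ← hh.2]
    · intro g hg
      simp only [mem_filter, comp_perm_mem_blockTuples, A] at hg ⊢
      exact ⟨hg.1.1, hg.2⟩
  have hcount : ∀ g ∈ A, #{σ : Equiv.Perm (Fin k) | (fun i => (g i).sum) ∘ σ = t} =
      multFact (univ.val.map t) :=
    fun g hg => card_filter_perm_comp_eq (mem_filter.1 hg).2
  calc (k ! : ℚ) * ∑ g ∈ blockTuples k μ with (fun i => (g i).sum) = t, ∏ i, c (g i)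
      = ∑ σ : Equiv.Perm (Fin k), ∑ g ∈ A with (fun i => (g i).sum) ∘ σ = t, ∏ i, c (g i) := by
        simp_rw [← hshift, sum_const, card_univ, Fintype.card_perm, Fintype.card_fin, nsmul_eq_mul]
    _ = ∑ g ∈ A, #{σ : Equiv.Perm (Fin k) | (fun i => (g i).sum) ∘ σ = t} * ∏ i, c (g i) := by
        simp_rw [sum_filter]
        rw [sum_comm]
        simp_rw [← sum_filter, sum_const, nsmul_eq_mul]
    _ = multFact (univ.val.map t) * ∑ g ∈ A, ∏ i, c (g i) := by
        rw [mul_sum]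
        exact sum_congr rfl fun g hg => by rw [hcount g hg]

theorem puzzles_eq_filter_blockTuples (μ : Multiset ℕ) {L : List ℕ} (hL : ∀ x ∈ L, 0 < x) :
    puzzles μ L = (blockTuples L.length μ).filter fun g => (fun i => (g i).sum) = L.get := by
  ext g
  simp only [puzzles, mem_filter, Fintype.mem_piFinset, Multiset.mem_toFinset,
    Multiset.mem_powerset, mem_blockTuples, funext_iff]
  constructor
  · rintro ⟨-, hsum, hsums⟩
    refine ⟨⟨hsum, fun i hi => ?_⟩, hsums⟩
    have := hL _ (L.get_mem i)
    rw [← hsums i, hi, Multiset.sum_zero] at this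
    exact this.false
  · rintro ⟨⟨hsum, -⟩, hsums⟩
    exact ⟨le_of_sum_eq hsum, hsum, hsums⟩

theorem inv_multFact_mul_sum_puzzles (μ lam : Multiset ℕ) (hlam : ∀ x ∈ lam, 0 < x)
    (c : Multiset ℕ → ℚ) :
    (multFact lam : ℚ)⁻¹ * ∑ g ∈ puzzles μ lam.toList, ∏ i, c (g i) =
      (lam.toList.length ! : ℚ)⁻¹ *
        ∑ g ∈ blockTuples lam.toList.length μ with blockSums g = lam, ∏ i, c (g i) := by
  have hL : univ.val.map lam.toList.get = lam := by
    rw [Fin.univ_val_map, List.ofFn_get, Multiset.coe_toList]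
  have key := factorial_mul_sum_filter_sums_eq μ lam.toList.get c
  rw [hL] at key
  rw [puzzles_eq_filter_blockTuples μ fun x hx => hlam x (Multiset.mem_toList.1 hx),
    inv_mul_eq_div, inv_mul_eq_div, div_eq_div_iff (by exact_mod_cast multFact_ne_zero lam)
      (by exact_mod_cast Nat.factorial_ne_zero _)]
  linear_combination key

theorem card_blockSums {k : ℕ} (g : Fin k → Multiset ℕ) : Multiset.card (blockSums g) = k := by
  rw [blockSums, Multiset.card_map, card_val, card_univ, Fintype.card_fin]

theorem blockSums_mem_image_parts {n k : ℕ} {μ : Nat.Partition n} {g : Fin k → Multiset ℕ}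
    (hg : g ∈ blockTuples k μ.parts) : blockSums g ∈ univ.image (Nat.Partition.parts (n := n)) := by
  obtain ⟨hsum, hne⟩ := mem_blockTuples.1 hg
  have hpos : ∀ v ∈ blockSums g, 0 < v := by
    simp only [blockSums, Multiset.mem_map, mem_univ_val, true_and]
    rintro _ ⟨i, rfl⟩
    obtain ⟨x, hx⟩ := Multiset.exists_mem_of_ne_zero (hne i)
    exact (μ.parts_pos (Multiset.mem_of_le (le_of_sum_eq hsum i) hx)).trans_le
      (Multiset.le_sum_of_mem hx)
  have htotal : (blockSums g).sum = n := by
    rw [← μ.parts_sum, ← hsum, Multiset.sum_sum]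
    rfl
  exact mem_image.2 ⟨⟨blockSums g, fun hv => hpos _ hv, htotal⟩, mem_univ _, rfl⟩

theorem sum_range_sum_blockTuples_eq_sum_partitions {n : ℕ} (μ : Nat.Partition n)
    (W : (k : ℕ) → (Fin k → Multiset ℕ) → ℚ) :
    ∑ k ∈ range (Multiset.card μ.parts + 1), ∑ g ∈ blockTuples k μ.parts, W k g =
      ∑ lam : Nat.Partition n,
        ∑ g ∈ blockTuples lam.parts.toList.length μ.parts with blockSums g = lam.parts, W _ g := by
  calc ∑ k ∈ range (Multiset.card μ.parts + 1), ∑ g ∈ blockTuples k μ.parts, W k g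
      = ∑ k ∈ range (Multiset.card μ.parts + 1), ∑ lam : Nat.Partition n,
          ∑ g ∈ blockTuples k μ.parts with blockSums g = lam.parts, W k g := by
        refine sum_congr rfl fun k _ => ?_
        rw [← sum_fiberwise_of_maps_to fun _ => blockSums_mem_image_parts,
          sum_image fun _ _ _ _ h => Nat.Partition.ext h]
    _ = _ := by
        rw [sum_comm]
        refine sum_congr rfl fun lam _ => sum_eq_single _ (fun k _ hk => ?_) fun hk => ?_
        · refine sum_eq_zero fun g hg => absurd ?_ hk
          rw [← card_blockSums g, (mem_filter.1 hg).2, Multiset.length_toList]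
        · rw [blockTuples_eq_empty_of_card_lt (by simpa using hk), filter_empty, sum_empty]

/-- `∑_{λ⊢n} (1/∏ n_i(λ)!) ∑_{puzzles μ→λ} ∏_i (l(μ^i)-1)!/∏_j n_j(μ^i)!
  = l(μ)!/∏ n_i(μ)!`. -/
theorem stmt17 (n : ℕ) (mu : Nat.Partition n) :
    ∑ lam : Nat.Partition n, (1 / (multFact lam.parts : ℚ)) *
        ∑ g ∈ puzzles mu.parts lam.parts.toList,
          ∏ i, (((g i).card - 1).factorial : ℚ) / (multFact (g i) : ℚ) =
      (mu.parts.card.factorial : ℚ) / (multFact mu.parts : ℚ) := by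
  calc _ = ∑ lam : Nat.Partition n, (lam.parts.toList.length ! : ℚ)⁻¹ *
        ∑ g ∈ blockTuples lam.parts.toList.length mu.parts with blockSums g = lam.parts,
          ∏ i, cycleWeight (g i) := by
        refine sum_congr rfl fun lam _ => ?_
        rw [one_div]
        exact inv_multFact_mul_sum_puzzles _ _ (fun _ hx => lam.parts_pos hx) cycleWeight
    _ = expBlockSum mu.parts := by
        simp only [expBlockSum, blockSum, mul_sum]
        exact (sum_range_sum_blockTuples_eq_sum_partitions mu
          fun k g => (k ! : ℚ)⁻¹ * ∏ i, cycleWeight (g i)).symm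
    _ = _ := expBlockSum_eq_wordWeight mu.parts
end
end

section
/- For each partition μ of n, the entry in row (n) of the inverse of the change-of-basis matrix R from the monomial basis to the power-sum basis satisfies (R^{-1})_{(n)μ} = (-1)^{l(μ)-1}(l(μ)-1)!/∏_i n_i(μ)!, i.e., it is the coefficient of p_n in m_μ. -/
open Finset
open scoped Classical

noncomputable section

/-- The monomial symmetric function `m_μ` for a multiset of parts. -/
def mSym (m : Multiset ℕ) : MvPowerSeries ℕ ℚ :=
  fun d => if expParts d = m then 1 else 0

/-- The power-sum symmetric function `p_m = ∑_k x_k^m`. -/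
def pPow (m : ℕ) : MvPowerSeries ℕ ℚ :=
  fun d => if ∃ k, d = Finsupp.single k m then 1 else 0

/-- `p_λ = p_{λ_1} ⋯ p_{λ_k}` for a multiset of parts. -/
def pProd (mm : Multiset ℕ) : MvPowerSeries ℕ ℚ := (mm.map pPow).prod

/-! ### Auxiliary machinery -/

def Dt (t n : ℕ) : Finset (ℕ →₀ ℕ) := Finset.finsuppAntidiag (Finset.range t) n

lemma mem_Dt {t n : ℕ} {d : ℕ →₀ ℕ} :
    d ∈ Dt t n ↔ d.sum (fun _ x => x) = n ∧ d.support ⊆ Finset.range t :=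
  Finset.mem_finsuppAntidiag'

def Ee (t n : ℕ) (f : MvPowerSeries ℕ ℚ) : ℚ := ∑ d ∈ Dt t n, f d

lemma sum_expParts (d : ℕ →₀ ℕ) : (expParts d).sum = d.sum (fun _ x => x) := rfl

lemma mem_expParts {d : ℕ →₀ ℕ} {j : ℕ} (h : j ∈ d.support) : d j ∈ expParts d :=
  Multiset.mem_map_of_mem _ h

/-- Monomials with exponent multiset `μ`, supported in `range t`. -/
def Cset (t : ℕ) (μ : Multiset ℕ) : Finset (ℕ →₀ ℕ) :=
  (Dt t μ.sum).filter fun d => expParts d = μ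

lemma mem_Cset {t : ℕ} {μ : Multiset ℕ} {d : ℕ →₀ ℕ} :
    d ∈ Cset t μ ↔ expParts d = μ ∧ d.support ⊆ Finset.range t := by
  simp only [Cset, Finset.mem_filter, mem_Dt]
  constructor
  · rintro ⟨⟨h1, h2⟩, h3⟩; exact ⟨h3, h2⟩
  · rintro ⟨h1, h2⟩
    exact ⟨⟨by rw [← sum_expParts, h1], h2⟩, h1⟩

lemma expParts_eq_zero_iff {d : ℕ →₀ ℕ} : expParts d = 0 ↔ d = 0 := by
  constructor
  · intro h
    have : d.support = ∅ := by
      by_contra hs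
      obtain ⟨j, hj⟩ := Finset.nonempty_iff_ne_empty.2 hs
      have := mem_expParts hj
      rw [h] at this
      exact Multiset.notMem_zero _ this
    exact Finsupp.support_eq_empty.1 this
  · rintro rfl; rfl

lemma expParts_erase (d : ℕ →₀ ℕ) (t : ℕ) (h : t ∈ d.support) :
    expParts (Finsupp.erase t d) = (expParts d).erase (d t) := by
  unfold expParts
  rw [Finsupp.support_erase]
  have h1 : (d.support.erase t).val.map ⇑(Finsupp.erase t d)
      = (d.support.erase t).val.map ⇑d := by
    apply Multiset.map_congr rfl
    intro x hx
    have hxt : x ≠ t := (Finset.mem_erase.1 hx).1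
    exact Finsupp.erase_ne hxt
  rw [h1, Finset.erase_val]
  conv_rhs => rw [← Multiset.cons_erase (show t ∈ d.support.val from h),
    Multiset.map_cons, Multiset.erase_cons_head]

lemma expParts_update (e : ℕ →₀ ℕ) (t v : ℕ) (hv : v ≠ 0) (ht : t ∉ e.support) :
    expParts (Finsupp.update e t v) = v ::ₘ expParts e := by
  unfold expParts
  rw [Finsupp.support_update_ne_zero _ _ hv, Finset.insert_val_of_notMem ht,
    Multiset.map_cons]
  congr 1
  · simp [Finsupp.coe_update]
  · apply Multiset.map_congr rfl
    intro x hx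
    have hxt : x ≠ t := fun hh => ht (hh ▸ hx)
    simp [Finsupp.coe_update, Function.update_of_ne hxt]

lemma multFact_erase {μ : Multiset ℕ} {v : ℕ} (hv : v ∈ μ) :
    multFact μ = μ.count v * multFact (μ.erase v) := by
  have hsub : (μ.erase v).toFinset ⊆ μ.toFinset :=
    Multiset.toFinset_subset.2 (Multiset.subset_of_le (Multiset.erase_le v μ))
  have h1 : multFact (μ.erase v) = ∏ j ∈ μ.toFinset, ((μ.erase v).count j).factorial := by
    unfold multFact
    refine (Finset.prod_subset (f := fun j => ((μ.erase v).count j).factorial) hsub ?_)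
    intro j _ hnj
    have h0 : (μ.erase v).count j = 0 :=
      Multiset.count_eq_zero.2 (fun hh => hnj (Multiset.mem_toFinset.2 hh))
    simp [h0]
  have hvf : v ∈ μ.toFinset := Multiset.mem_toFinset.2 hv
  rw [multFact, h1, ← Finset.mul_prod_erase _ _ hvf, ← Finset.mul_prod_erase _ _ hvf,
    ← mul_assoc]
  have hc : 0 < μ.count v := Multiset.count_pos.2 hv
  congr 1
  · rw [Multiset.count_erase_self]
    obtain ⟨c, hcv⟩ : ∃ c, μ.count v = c + 1 := ⟨μ.count v - 1, by omega⟩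
    rw [hcv]
    simp [Nat.factorial_succ]
  · apply Finset.prod_congr rfl
    intro j hj
    rw [Multiset.count_erase_of_ne (Finset.mem_erase.1 hj).1]

lemma dF_rec (t k : ℕ) :
    t.descFactorial (k + 1) + (k + 1) * t.descFactorial k = (t + 1).descFactorial (k + 1) := by
  rw [Nat.succ_descFactorial_succ, Nat.descFactorial_succ]
  rcases le_or_gt k t with h | h
  · rw [← add_mul]; congr 1; omega
  · have h0 : t.descFactorial k = 0 := Nat.descFactorial_eq_zero_iff_lt.2 h
    simp [h0]

lemma card_Cset_mul (t : ℕ) : ∀ μ : Multiset ℕ, (0 : ℕ) ∉ μ →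
    (Cset t μ).card * multFact μ = t.descFactorial (Multiset.card μ) := by
  induction t with
  | zero =>
    intro μ hμ
    rcases eq_or_ne μ 0 with rfl | hne
    · have h0 : Cset 0 (0 : Multiset ℕ) = {0} := by
        ext d
        simp only [mem_Cset, Finset.range_zero, Finset.subset_empty, Finsupp.support_eq_empty,
          Finset.mem_singleton, expParts_eq_zero_iff]
        tauto
      simp [h0, multFact]
    · have h0 : Cset 0 μ = ∅ := by
        ext d
        simp only [mem_Cset, Finset.range_zero, Finset.subset_empty, Finsupp.support_eq_empty,
          Finset.notMem_empty, iff_false, not_and]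
        rintro h rfl
        exact hne (by rw [← h, expParts_eq_zero_iff.2 rfl])
      obtain ⟨k, hk⟩ : ∃ k, Multiset.card μ = k + 1 :=
        Nat.exists_eq_succ_of_ne_zero (fun hc => hne (Multiset.card_eq_zero.1 hc))
      simp [h0, hk]
  | succ t ih =>
    intro μ hμ
    have hsplit := Finset.card_filter_add_card_filter_not
      (s := Cset (t+1) μ) (p := fun d => d t = 0)
    have hA : (Cset (t+1) μ).filter (fun d => d t = 0) = Cset t μ := by
      ext d
      simp only [Finset.mem_filter, mem_Cset]
      constructor
      · rintro ⟨⟨h1, h2⟩, h3⟩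
        refine ⟨h1, fun x hx => ?_⟩
        have hxt : x ≠ t := fun hh => (Finsupp.mem_support_iff.1 hx) (hh ▸ h3)
        have hxr := h2 hx
        simp only [Finset.mem_range] at hxr ⊢
        omega
      · rintro ⟨h1, h2⟩
        have hts : t ∉ d.support := fun hh => by
          have := h2 hh; simp at this
        refine ⟨⟨h1, h2.trans (by intro x hx; simp at hx ⊢; omega)⟩,
          Finsupp.notMem_support_iff.1 hts⟩
    have hB : (Cset (t+1) μ).filter (fun d => ¬ d t = 0)
        = μ.toFinset.biUnion (fun v => (Cset (t+1) μ).filter (fun d => d t = v ∧ v ≠ 0)) := by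
      ext d
      simp only [Finset.mem_filter, Finset.mem_biUnion, Multiset.mem_toFinset]
      constructor
      · rintro ⟨hd, hdt⟩
        refine ⟨d t, ?_, hd, rfl, hdt⟩
        have hmem : d t ∈ expParts d := mem_expParts (Finsupp.mem_support_iff.2 hdt)
        rwa [(mem_Cset.1 hd).1] at hmem
      · rintro ⟨v, hvμ, hd, rfl, hv0⟩
        exact ⟨hd, hv0⟩
    have hdisj : ∀ x ∈ μ.toFinset, ∀ y ∈ μ.toFinset, x ≠ y →
        Disjoint ((Cset (t+1) μ).filter (fun d => d t = x ∧ x ≠ 0))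
          ((Cset (t+1) μ).filter (fun d => d t = y ∧ y ≠ 0)) := by
      intro x _ y _ hxy
      refine Finset.disjoint_left.2 ?_
      rintro d hdx hdy
      simp only [Finset.mem_filter] at hdx hdy
      exact hxy (hdx.2.1 ▸ hdy.2.1 ▸ rfl)
    have hBv : ∀ v ∈ μ.toFinset,
        ((Cset (t+1) μ).filter (fun d => d t = v ∧ v ≠ 0)).card = (Cset t (μ.erase v)).card := by
      intro v hvμ'
      have hvμ : v ∈ μ := Multiset.mem_toFinset.1 hvμ'
      have hv0 : v ≠ 0 := fun hh => hμ (hh ▸ hvμ)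
      apply Finset.card_nbij' (i := fun d => Finsupp.erase t d)
        (j := fun e => Finsupp.update e t v)
      · intro d hd
        simp only [Finset.mem_coe, Finset.mem_filter, mem_Cset] at hd
        obtain ⟨⟨h1, h2⟩, h3, _⟩ := hd
        have hts : t ∈ d.support := Finsupp.mem_support_iff.2 (h3 ▸ hv0)
        simp only [Finset.mem_coe]; rw [mem_Cset, expParts_erase d t hts, h3, h1]
        refine ⟨rfl, ?_⟩
        rw [Finsupp.support_erase]
        intro x hx
        obtain ⟨hxt, hxs⟩ := Finset.mem_erase.1 hx
        have hxr := h2 hxs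
        simp only [Finset.mem_range] at hxr ⊢
        omega
      · intro e he
        rw [Finset.mem_coe, mem_Cset] at he
        obtain ⟨h1, h2⟩ := he
        have hte : t ∉ e.support := fun hh => by have := h2 hh; simp at this
        simp only [Finset.mem_coe, Finset.mem_filter, mem_Cset]
        refine ⟨⟨?_, ?_⟩, by simp [Finsupp.coe_update], hv0⟩
        · rw [expParts_update e t v hv0 hte, h1, Multiset.cons_erase hvμ]
        · rw [Finsupp.support_update_ne_zero _ _ hv0]
          intro x hx
          rcases Finset.mem_insert.1 hx with rfl | hxs
          · simp
          · have := h2 hxs; simp only [Finset.mem_range] at this ⊢; omega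
      · intro d hd
        simp only [Finset.mem_coe, Finset.mem_filter] at hd
        dsimp only; rw [Finsupp.update_erase_eq_update, ← hd.2.1, Finsupp.update_self]
      · intro e he
        rw [Finset.mem_coe, mem_Cset] at he
        have hte : t ∉ e.support := fun hh => by have := he.2 hh; simp at this
        dsimp only; rw [Finsupp.erase_update_eq_erase, Finsupp.erase_of_notMem_support hte]
    have hcard : (Cset (t+1) μ).card
        = (Cset t μ).card + ∑ v ∈ μ.toFinset, (Cset t (μ.erase v)).card := by
      rw [← hsplit, hA, hB, Finset.card_biUnion hdisj]
      congr 1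
      exact Finset.sum_congr rfl hBv
    rw [hcard, add_mul, Finset.sum_mul, ih μ hμ]
    rcases eq_or_ne μ 0 with rfl | hne
    · simp
    obtain ⟨k, hk⟩ : ∃ k, Multiset.card μ = k + 1 :=
      Nat.exists_eq_succ_of_ne_zero (fun hc => hne (Multiset.card_eq_zero.1 hc))
    have hsum : ∑ v ∈ μ.toFinset, (Cset t (μ.erase v)).card * multFact μ
        = (k + 1) * t.descFactorial k := by
      have hterm : ∀ v ∈ μ.toFinset, (Cset t (μ.erase v)).card * multFact μ
          = μ.count v * t.descFactorial k := by
        intro v hv'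
        have hv : v ∈ μ := Multiset.mem_toFinset.1 hv'
        rw [multFact_erase hv, ← mul_assoc, mul_comm ((Cset t (μ.erase v)).card) (μ.count v),
          mul_assoc, ih (μ.erase v) (fun hh => hμ (Multiset.mem_of_mem_erase hh)),
          Multiset.card_erase_of_mem hv, hk]
        rfl
      rw [Finset.sum_congr rfl hterm, ← Finset.sum_mul, Multiset.toFinset_sum_count_eq, hk]
    rw [hsum, hk, dF_rec]


lemma Ee_mul (t n : ℕ) (f g : MvPowerSeries ℕ ℚ) :
    Ee t n (f * g) = ∑ p ∈ Finset.HasAntidiagonal.antidiagonal n, Ee t p.1 f * Ee t p.2 g := by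
  unfold Ee
  have hco : ∀ d : ℕ →₀ ℕ, (f * g) d
      = ∑ p ∈ Finset.HasAntidiagonal.antidiagonal d, f p.1 * g p.2 := by
    intro d
    have h := MvPowerSeries.coeff_mul (R := ℚ) (σ := ℕ) (n := d) (φ := f) (ψ := g)
    simpa [MvPowerSeries.coeff_apply] using h
  rw [Finset.sum_congr rfl (fun d _ => hco d)]
  have hrhs : ∀ p : ℕ × ℕ, (∑ d1 ∈ Dt t p.1, f d1) * (∑ d2 ∈ Dt t p.2, g d2)
      = ∑ q ∈ (Dt t p.1) ×ˢ (Dt t p.2), f q.1 * g q.2 := by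
    intro p
    refine (Finset.sum_mul_sum ..).trans ?_
    exact (Finset.sum_product (Dt t p.1) (Dt t p.2) (fun q => f q.1 * g q.2)).symm
  rw [Finset.sum_congr rfl (fun p _ => hrhs p)]
  rw [Finset.sum_sigma', Finset.sum_sigma']
  refine Finset.sum_nbij' (i := fun x => ⟨(x.2.1.sum fun _ k => k, x.2.2.sum fun _ k => k), x.2⟩)
    (j := fun y => ⟨y.2.1 + y.2.2, y.2⟩) ?_ ?_ ?_ ?_ ?_
  · rintro ⟨d, d1, d2⟩ hx
    simp only [Finset.mem_sigma, mem_Dt, Finset.HasAntidiagonal.mem_antidiagonal, Finset.mem_product] at hx ⊢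
    obtain ⟨⟨hdeg, hsupp⟩, hadd⟩ := hx
    have hsub1 : d1.support ⊆ d.support := by
      intro x hx1
      rw [Finsupp.mem_support_iff] at hx1 ⊢
      rw [← hadd]
      simp only [Finsupp.coe_add, Pi.add_apply]
      omega
    have hsub2 : d2.support ⊆ d.support := by
      intro x hx2
      rw [Finsupp.mem_support_iff] at hx2 ⊢
      rw [← hadd]
      simp only [Finsupp.coe_add, Pi.add_apply]
      omega
    refine ⟨?_, ⟨trivial, hsub1.trans hsupp⟩, ⟨trivial, hsub2.trans hsupp⟩⟩
    rw [← hdeg, ← hadd]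
    exact (Finsupp.sum_add_index' (fun _ => rfl) (fun _ _ _ => rfl)).symm
  · rintro ⟨⟨a, b⟩, d1, d2⟩ hy
    simp only [Finset.mem_sigma, mem_Dt, Finset.HasAntidiagonal.mem_antidiagonal, Finset.mem_product] at hy ⊢
    obtain ⟨hab, ⟨h1deg, h1s⟩, ⟨h2deg, h2s⟩⟩ := hy
    refine ⟨⟨?_, ?_⟩, trivial⟩
    · rw [Finsupp.sum_add_index' (fun _ => rfl) (fun _ _ _ => rfl), h1deg, h2deg, hab]
    · exact Finsupp.support_add.trans (Finset.union_subset h1s h2s)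
  · rintro ⟨d, d1, d2⟩ hx
    simp only [Finset.mem_sigma, mem_Dt, Finset.HasAntidiagonal.mem_antidiagonal] at hx
    have : d1 + d2 = d := hx.2
    simp only [this]
  · rintro ⟨⟨a, b⟩, d1, d2⟩ hy
    simp only [Finset.mem_sigma, mem_Dt, Finset.HasAntidiagonal.mem_antidiagonal, Finset.mem_product] at hy
    obtain ⟨hab, ⟨h1deg, _⟩, ⟨h2deg, _⟩⟩ := hy
    simp only [h1deg, h2deg]
  · rintro ⟨d, d1, d2⟩ _
    rfl

lemma deg_single (j k : ℕ) : (Finsupp.single j k).sum (fun _ x => x) = k :=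
  Finsupp.sum_single_index rfl

lemma Ee_pPow_ne (t m k : ℕ) (hmk : m ≠ k) : Ee t m (pPow k) = 0 := by
  unfold Ee pPow
  refine Finset.sum_eq_zero fun d hd => ?_
  rw [if_neg]
  rintro ⟨j, rfl⟩
  exact hmk (((mem_Dt.1 hd).1).symm.trans (deg_single j k) ▸ rfl)

lemma Ee_pPow_self (t k : ℕ) (hk : k ≠ 0) : Ee t k (pPow k) = t := by
  unfold Ee pPow
  rw [Finset.sum_boole]
  have himg : (Dt t k).filter (fun d => ∃ j, d = Finsupp.single j k)
      = (Finset.range t).image (fun j => Finsupp.single j k) := by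
    ext d
    simp only [Finset.mem_filter, Finset.mem_image, Finset.mem_range, mem_Dt]
    constructor
    · rintro ⟨⟨hdeg, hsupp⟩, j, rfl⟩
      refine ⟨j, ?_, rfl⟩
      have : j ∈ (Finsupp.single j k).support := by
        rw [Finsupp.support_single_ne_zero _ hk]; simp
      have := hsupp this
      simpa using this
    · rintro ⟨j, hj, rfl⟩
      refine ⟨⟨deg_single j k, ?_⟩, j, rfl⟩
      rw [Finsupp.support_single_ne_zero _ hk]
      simpa using hj
  rw [himg, Finset.card_image_of_injective _ (Finsupp.single_left_injective hk),
    Finset.card_range]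

lemma Ee_one (t : ℕ) : Ee t 0 (1 : MvPowerSeries ℕ ℚ) = 1 := by
  unfold Ee
  have hDt : Dt t 0 = {0} := by
    ext d
    simp only [mem_Dt, Finset.mem_singleton]
    constructor
    · rintro ⟨hdeg, _⟩
      ext x
      rcases eq_or_ne (d x) 0 with h | h
      · simp [h]
      · exfalso
        have hx : x ∈ d.support := Finsupp.mem_support_iff.2 h
        have : d x ≤ d.sum (fun _ x => x) := Finset.single_le_sum (f := fun a => d a)
          (fun _ _ => Nat.zero_le _) hx
        omega
    · rintro rfl
      simp [Finsupp.sum]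
  rw [hDt]; refine (Finset.sum_singleton _ _).trans ?_
  have : (1 : MvPowerSeries ℕ ℚ) 0 = 1 := by
    have := MvPowerSeries.coeff_zero_one (σ := ℕ) (R := ℚ)
    simpa [MvPowerSeries.coeff_apply] using this
  exact this

lemma Ee_pProd (t : ℕ) (ν : Multiset ℕ) (hν : (0:ℕ) ∉ ν) :
    Ee t ν.sum (pProd ν) = (t : ℚ) ^ Multiset.card ν := by
  induction ν using Multiset.induction with
  | empty =>
    simp only [pProd, Multiset.map_zero, Multiset.prod_zero, Multiset.sum_zero,
      Multiset.card_zero, pow_zero]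
    exact Ee_one t
  | cons a s ih =>
    have ha0 : a ≠ 0 := fun hh => hν (hh ▸ Multiset.mem_cons_self a s)
    have hs0 : (0:ℕ) ∉ s := fun hh => hν (Multiset.mem_cons_of_mem hh)
    rw [pProd, Multiset.map_cons, Multiset.prod_cons, Multiset.sum_cons, Multiset.card_cons]
    have : (s.map pPow).prod = pProd s := rfl
    rw [this, Ee_mul]
    rw [Finset.sum_eq_single (a, s.sum)]
    · rw [Ee_pPow_self t a ha0, ih hs0, pow_succ]
      ring
    · rintro ⟨x, y⟩ hq hne
      rcases eq_or_ne x a with rfl | hxa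
      · have : y = s.sum := by
          have := Finset.HasAntidiagonal.mem_antidiagonal.1 hq; omega
        exact absurd (by rw [this]) hne
      · rw [Ee_pPow_ne t x a hxa, zero_mul]
    · intro h
      exact absurd ((Finset.HasAntidiagonal.mem_antidiagonal (n := a + s.sum)).2 rfl) h

lemma Ee_mSym (t : ℕ) (μ : Multiset ℕ) :
    Ee t μ.sum (mSym μ) = ((Cset t μ).card : ℚ) := by
  unfold Ee mSym
  rw [Finset.sum_boole]
  rfl

lemma Ee_sum_smul {ι : Type*} [Fintype ι] (t n : ℕ) (a : ι → ℚ) (F : ι → MvPowerSeries ℕ ℚ) :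
    Ee t n (∑ i, a i • F i) = ∑ i, a i * Ee t n (F i) := by
  unfold Ee
  have hpt : ∀ d : ℕ →₀ ℕ, (∑ i, a i • F i) d = ∑ i, a i * (F i) d := by
    intro d
    have h1 : (∑ i, a i • F i) d = MvPowerSeries.coeff d (∑ i, a i • F i) := rfl
    rw [h1, map_sum]
    refine Finset.sum_congr rfl fun i _ => ?_
    rw [MvPowerSeries.coeff_smul]
    rfl
  rw [Finset.sum_congr rfl (fun d _ => hpt d), Finset.sum_comm]
  refine Finset.sum_congr rfl fun i _ => ?_
  exact (Finset.mul_sum _ _ _).symm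

lemma Ee_mSym' (t n : ℕ) (μ : Multiset ℕ) (h : μ.sum = n) :
    Ee t n (mSym μ) = ((Cset t μ).card : ℚ) := by
  subst h; exact Ee_mSym t μ

lemma Ee_pProd' (t n : ℕ) (ν : Multiset ℕ) (hν : (0:ℕ) ∉ ν) (h : ν.sum = n) :
    Ee t n (pProd ν) = (t : ℚ) ^ Multiset.card ν := by
  subst h; exact Ee_pProd t ν hν

lemma descPochhammer_coeff_one (k : ℕ) :
    (descPochhammer ℚ (k+1)).coeff 1 = (-1)^k * (k.factorial : ℚ) := by
  induction k with
  | zero => simp [descPochhammer_one]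
  | succ k ih =>
    have h0 : (descPochhammer ℚ (k+1)).coeff 0 = 0 := by
      rw [Polynomial.coeff_zero_eq_eval_zero]
      exact descPochhammer_ne_zero_eval_zero ℚ (Nat.succ_ne_zero k)
    rw [descPochhammer_succ_right, mul_sub, Polynomial.coeff_sub]
    have h1 : (descPochhammer ℚ (k+1) * Polynomial.X).coeff 1
        = (descPochhammer ℚ (k+1)).coeff 0 := Polynomial.coeff_mul_X _ 0
    have h2 : (descPochhammer ℚ (k+1) * (((k+1 : ℕ)) : Polynomial ℚ)).coeff 1
        = (descPochhammer ℚ (k+1)).coeff 1 * ((k+1 : ℕ) : ℚ) := by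
      rw [← Polynomial.C_eq_natCast, Polynomial.coeff_mul_C]
    push_cast at h2 ⊢
    rw [h1, h0, h2, ih, Nat.factorial_succ]
    push_cast
    ring

lemma partition_card_one {n : ℕ} (hn : n ≠ 0) (ν : Nat.Partition n)
    (h : Multiset.card ν.parts = 1) : ν = Nat.Partition.indiscrete n := by
  obtain ⟨k, hk⟩ := Multiset.card_eq_one.1 h
  have hkn : k = n := by
    have hs := ν.parts_sum
    rw [hk] at hs
    simpa using hs
  apply Nat.Partition.ext
  rw [hk, hkn, Nat.Partition.indiscrete_parts hn]

lemma indiscrete_card {n : ℕ} (hn : n ≠ 0) :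
    Multiset.card (Nat.Partition.indiscrete n).parts = 1 := by
  rw [Nat.Partition.indiscrete_parts hn]
  rfl

theorem stmt19' (n : ℕ) (mu : Nat.Partition n)
    (a : Nat.Partition n → ℚ)
    (ha : mSym mu.parts = ∑ nu : Nat.Partition n, a nu • pProd nu.parts) :
    a (Nat.Partition.indiscrete n) =
      (-1 : ℚ) ^ (Multiset.card mu.parts - 1) * ((Multiset.card mu.parts - 1).factorial : ℚ) /
        (multFact mu.parts : ℚ) := by
  rcases eq_or_ne n 0 with rfl | hn
  · have hmu : mu.parts = 0 := mu.partition_zero_parts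
    have hone : mSym mu.parts = (1 : MvPowerSeries ℕ ℚ) := by
      funext d
      rw [hmu]
      show (if expParts d = 0 then (1:ℚ) else 0) = _
      have h1 : (1 : MvPowerSeries ℕ ℚ) d = if d = 0 then 1 else 0 := by
        have := MvPowerSeries.coeff_one (R := ℚ) (σ := ℕ) (n := d)
        simpa [MvPowerSeries.coeff_apply] using this
      rw [h1]
      simp only [expParts_eq_zero_iff]
    have happ := congrArg (Ee 1 0) ha
    rw [Ee_sum_smul, hone, Ee_one] at happ
    have hterm : ∀ ν : Nat.Partition 0, a ν * Ee 1 0 (pProd ν.parts) = a ν := by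
      intro ν
      rw [ν.partition_zero_parts]
      show a ν * Ee 1 0 ((Multiset.map pPow 0).prod) = a ν
      rw [Multiset.map_zero, Multiset.prod_zero, Ee_one, mul_one]
    rw [Finset.sum_congr rfl (fun ν _ => hterm ν)] at happ
    have huniq : ∑ ν : Nat.Partition 0, a ν = a (Nat.Partition.indiscrete 0) := by
      rw [Finset.sum_eq_single (Nat.Partition.indiscrete 0)]
      · intro b _ hb
        exact absurd (Subsingleton.elim b (Nat.Partition.indiscrete 0)) hb
      · intro h
        exact absurd (Finset.mem_univ _) h
    rw [huniq] at happ
    rw [← happ, hmu]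
    show (1:ℚ) = (-1:ℚ)^(Multiset.card (0 : Multiset ℕ) - 1) * _ / _
    norm_num [multFact]
  · -- main case
    have hl : Multiset.card mu.parts ≠ 0 := by
      intro h
      exact hn (by rw [← mu.parts_sum, Multiset.card_eq_zero.1 h]; rfl)
    obtain ⟨l', hl'⟩ := Nat.exists_eq_succ_of_ne_zero hl
    have hm0 : (0:ℕ) < multFact mu.parts := Finset.prod_pos fun _ _ => Nat.factorial_pos _
    have hmne : (multFact mu.parts : ℚ) ≠ 0 := Nat.cast_ne_zero.2 hm0.ne'
    set P : Polynomial ℚ :=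
      (∑ ν : Nat.Partition n, Polynomial.C (a ν) * Polynomial.X ^ (Multiset.card ν.parts))
        * Polynomial.C ((multFact mu.parts : ℚ)) - descPochhammer ℚ (Multiset.card mu.parts)
      with hP
    have hroot : ∀ t : ℕ, P.eval (t:ℚ) = 0 := by
      intro t
      have happ := congrArg (Ee t n) ha
      rw [Ee_sum_smul] at happ
      have hms : Ee t n (mSym mu.parts) = ((Cset t mu.parts).card : ℚ) := by
        exact Ee_mSym' t n mu.parts mu.parts_sum
      have hpp : ∀ ν : Nat.Partition n,
          a ν * Ee t n (pProd ν.parts) = a ν * (t:ℚ) ^ (Multiset.card ν.parts) := by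
        intro ν
        congr 1
        exact Ee_pProd' t n ν.parts (fun hh => (ν.parts_pos hh).ne rfl) ν.parts_sum
      rw [hms, Finset.sum_congr rfl (fun ν _ => hpp ν)] at happ
      have hcount : ((Cset t mu.parts).card : ℚ) * (multFact mu.parts : ℚ)
          = (t.descFactorial (Multiset.card mu.parts) : ℚ) := by
        rw [← Nat.cast_mul, card_Cset_mul t mu.parts (fun hh => (mu.parts_pos hh).ne rfl)]
      simp only [hP, Polynomial.eval_sub, Polynomial.eval_mul, Polynomial.eval_C,
        Polynomial.eval_finset_sum, Polynomial.eval_pow, Polynomial.eval_X]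
      rw [descPochhammer_eval_eq_descFactorial, ← hcount, ← happ]
      ring
    have hP0 : P = 0 := by
      refine Polynomial.eq_zero_of_infinite_isRoot P ?_
      exact Set.infinite_of_injective_forall_mem (f := fun t : ℕ => (t:ℚ))
        Nat.cast_injective (fun t => hroot t)
    have hc1 : P.coeff 1 = 0 := by rw [hP0]; simp
    rw [hP, Polynomial.coeff_sub, Polynomial.coeff_mul_C, Polynomial.finset_sum_coeff] at hc1
    have hsum1 : (∑ ν : Nat.Partition n,
        (Polynomial.C (a ν) * Polynomial.X ^ (Multiset.card ν.parts)).coeff 1)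
        = a (Nat.Partition.indiscrete n) := by
      rw [Finset.sum_eq_single (Nat.Partition.indiscrete n)]
      · rw [Polynomial.coeff_C_mul, Polynomial.coeff_X_pow, if_pos (indiscrete_card hn).symm,
          mul_one]
      · intro ν _ hν
        rw [Polynomial.coeff_C_mul, Polynomial.coeff_X_pow, if_neg, mul_zero]
        intro h1
        exact hν (partition_card_one hn ν h1.symm)
      · intro h
        exact absurd (Finset.mem_univ _) h
    rw [hsum1, hl', descPochhammer_coeff_one l'] at hc1
    rw [hl', Nat.succ_sub_one]
    rw [eq_div_iff hmne]
    linarith [hc1]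

/-- `(R^{-1})_{(n)μ}`: the coefficient of `p_{(n)}` in the power-sum expansion of `m_μ`
is `(-1)^{l(μ)-1}(l(μ)-1)!/∏ n_i(μ)!`, where the expansion coefficients are given by
any family `a` with `m_μ = ∑ a ν • p_ν` (unique, the `p`'s being a basis). -/
theorem stmt19 (n : ℕ) (mu : Nat.Partition n)
    (a : Nat.Partition n → ℚ)
    (ha : mSym mu.parts = ∑ nu : Nat.Partition n, a nu • pProd nu.parts) :
    a (Nat.Partition.indiscrete n) =
      (-1 : ℚ) ^ (mu.parts.card - 1) * ((mu.parts.card - 1).factorial : ℚ) /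
        (multFact mu.parts : ℚ) :=
  stmt19' n mu a ha

end
end
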